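/- arXiv:2007.07794 — 3 statements merged into one kernel-verified Lean document; each statement's English description precedes it below -/
import Mathlib

section
/- Let f be a terminating feasible flow over time in a single-sink network. Then its total travel time satisfies Ψ(f) = ∫₀^{Θ(f)} F^Δ(θ) dθ. -/
open MeasureTheory Set

noncomputable section

/-- A single-sink network: a finite directed graph with integer travel times and
capacities on the edges, a sink node, and network inflow rates at the nodes
supported in `[0, theta0]`. -/
structure Network where
  V : Type
  E : Type
  fintypeV : Fintype V
  decV : DecidableEq V
  fintypeE : Fintype E
  decE : DecidableEq E
  src : E → V
  dst : E → V
  sink : V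
  tau : E → ℕ
  nu : E → ℕ
  tau_pos : ∀ e, 1 ≤ tau e
  nu_pos : ∀ e, 1 ≤ nu e
  theta0 : ℝ
  theta0_nonneg : 0 ≤ theta0
  u : V → ℝ → ℝ
  u_nonneg : ∀ v θ, 0 ≤ u v θ
  u_sink : ∀ θ, u sink θ = 0
  u_integrable : ∀ v, MeasureTheory.Integrable (u v) MeasureTheory.volume
  u_support : ∀ v θ, θ ∉ Set.Icc 0 theta0 → u v θ = 0

attribute [instance] Network.fintypeV Network.decV Network.fintypeE Network.decE

namespace Network

variable (N : Network)

/-- `N.IsWalkBetween v w p` : the list of edges `p` forms a walk from `v` to `w`. -/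
def IsWalkBetween : N.V → N.V → List N.E → Prop
  | v, w, [] => v = w
  | v, w, e :: p => N.src e = v ∧ IsWalkBetween (N.dst e) w p

/-- A walk from `v` to the sink. -/
def IsWalk (v : N.V) (p : List N.E) : Prop := N.IsWalkBetween v N.sink p

/-- The sink is reachable from every node. -/
def Reachable : Prop := ∀ v : N.V, ∃ p, N.IsWalk v p

/-- The graph has no (nonempty) cycles. -/
def Acyclic : Prop := ∀ v p, N.IsWalkBetween v v p → p = []

/-- Total travel time `τ(G)` of the network. -/
def tauSum : ℝ := ∑ e, (N.tau e : ℝ)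

/-- Physical length of a path. -/
def pathTau (p : List N.E) : ℝ := (p.map fun e => (N.tau e : ℝ)).sum

/-- `τ(P_max)`: the maximum physical length of a simple path ending at the sink. -/
def tauPmax : ℝ :=
  sSup { x | ∃ v p, N.IsWalk v p ∧ (v :: p.map N.dst).Nodup ∧ x = N.pathTau p }

/-- Edges leaving `v`. -/
def outEdges (v : N.V) : Finset N.E := Finset.univ.filter fun e => N.src e = v

/-- Edges entering `v`. -/
def inEdges (v : N.V) : Finset N.E := Finset.univ.filter fun e => N.dst e = v

/-- Cumulative network inflow `U_v(θ)`. -/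
def cumInflow (v : N.V) (θ : ℝ) : ℝ := ∫ ζ in (0:ℝ)..θ, N.u v ζ

/-- Total inflow volume `U`. -/
def totalInflow : ℝ := ∑ v ∈ Finset.univ.erase N.sink, N.cumInflow v N.theta0

/-- `p` is a physically shortest `v`-`t` path. -/
def PhysShortest (v : N.V) (p : List N.E) : Prop :=
  N.IsWalk v p ∧ ∀ p', N.IsWalk v p' → N.pathTau p ≤ N.pathTau p'

/-- Physical distance from `v` to the sink. -/
def physDist (v : N.V) : ℝ := sInf { x | ∃ p, N.IsWalk v p ∧ x = N.pathTau p }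

/-- `E(T)`: edges with both endpoints in `T`. -/
def edgesIn (T : Finset N.V) : Finset N.E :=
  Finset.univ.filter fun e => N.src e ∈ T ∧ N.dst e ∈ T

/-- `δ⁻_T`: edges entering `T`. -/
def deltaMinus (T : Finset N.V) : Finset N.E :=
  Finset.univ.filter fun e => N.src e ∉ T ∧ N.dst e ∈ T

/-- `δ⁺_T`: edges leaving `T`. -/
def deltaPlus (T : Finset N.V) : Finset N.E :=
  Finset.univ.filter fun e => N.src e ∈ T ∧ N.dst e ∉ T

/-- A flow over time: nonnegative, locally integrable edge in- and outflow rates,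
vanishing for negative times. -/
structure Flow (N : Network) where
  fp : N.E → ℝ → ℝ
  fm : N.E → ℝ → ℝ
  fp_nonneg : ∀ e θ, 0 ≤ fp e θ
  fm_nonneg : ∀ e θ, 0 ≤ fm e θ
  fp_zero : ∀ e θ, θ < 0 → fp e θ = 0
  fp_locInt : ∀ e, MeasureTheory.LocallyIntegrable (fp e) MeasureTheory.volume
  fm_locInt : ∀ e, MeasureTheory.LocallyIntegrable (fm e) MeasureTheory.volume

namespace Flow

variable {N : Network} (f : N.Flow)

/-- Cumulative edge inflow `F⁺_e`. -/
def Fp (e : N.E) (θ : ℝ) : ℝ := ∫ ζ in (0:ℝ)..θ, f.fp e ζ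

/-- Cumulative edge outflow `F⁻_e`. -/
def Fm (e : N.E) (θ : ℝ) : ℝ := ∫ ζ in (0:ℝ)..θ, f.fm e ζ

/-- Queue length `q_e(θ) = F⁺_e(θ) - F⁻_e(θ + τ_e)`. -/
def queue (e : N.E) (θ : ℝ) : ℝ := f.Fp e θ - f.Fm e (θ + (N.tau e : ℝ))

/-- Edge load `F^Δ_e(θ) = F⁺_e(θ) - F⁻_e(θ)`. -/
def load (e : N.E) (θ : ℝ) : ℝ := f.Fp e θ - f.Fm e θ

/-- Total flow volume in the network `F^Δ(θ)`. -/
def totalLoad (θ : ℝ) : ℝ := ∑ e, f.load e θ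

/-- Flow volume having reached the sink, `Z(θ)`. -/
def Z (θ : ℝ) : ℝ :=
  ∑ e ∈ N.inEdges N.sink, f.Fm e θ - ∑ e ∈ N.outEdges N.sink, f.Fp e θ

/-- Instantaneous travel time `c_e(θ) = τ_e + q_e(θ)/ν_e`. -/
def c (e : N.E) (θ : ℝ) : ℝ := (N.tau e : ℝ) + f.queue e θ / (N.nu e : ℝ)

/-- Node label `ℓ_v(θ)`: instantaneous distance from `v` to the sink. -/
def label (v : N.V) (θ : ℝ) : ℝ :=
  sInf { x | ∃ p, N.IsWalk v p ∧ x = (p.map fun e => f.c e θ).sum }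

/-- Edge `e` is active at time `θ`. -/
def Active (e : N.E) (θ : ℝ) : Prop :=
  f.label (N.src e) θ = f.label (N.dst e) θ + f.c e θ

/-- `p` is an active `v`-`t` path at time `θ`. -/
def ActivePath (v : N.V) (p : List N.E) (θ : ℝ) : Prop :=
  N.IsWalk v p ∧ ∀ e ∈ p, f.Active e θ

/-- Feasibility of a flow over time: flow conservation at non-sink nodes,
nonpositive excess at the sink, no outflow before `τ_e`, and queues operating
at capacity. -/
def Feasible : Prop :=
  (∀ v, v ≠ N.sink → ∀ᵐ θ ∂(volume : Measure ℝ), 0 ≤ θ →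
      (∑ e ∈ N.outEdges v, f.fp e θ) - ∑ e ∈ N.inEdges v, f.fm e θ = N.u v θ) ∧
  (∀ᵐ θ ∂(volume : Measure ℝ), 0 ≤ θ →
      (∑ e ∈ N.outEdges N.sink, f.fp e θ) - ∑ e ∈ N.inEdges N.sink, f.fm e θ ≤ 0) ∧
  (∀ e θ, θ < (N.tau e : ℝ) → f.fm e θ = 0) ∧
  (∀ e, ∀ᵐ θ ∂(volume : Measure ℝ), 0 ≤ θ →
      (0 < f.queue e θ → f.fm e (θ + (N.tau e : ℝ)) = (N.nu e : ℝ)) ∧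
      (f.queue e θ ≤ 0 → f.fm e (θ + (N.tau e : ℝ)) = min (f.fp e θ) (N.nu e : ℝ)))

/-- Instantaneous dynamic equilibrium: a feasible flow only using active edges. -/
def IsIDE : Prop :=
  f.Feasible ∧ ∀ e, ∀ᵐ θ ∂(volume : Measure ℝ), 0 ≤ θ → 0 < f.fp e θ → f.Active e θ

/-- The flow terminates. -/
def Terminates : Prop := ∃ θ, N.theta0 ≤ θ ∧ f.totalLoad θ = 0

/-- Makespan `Θ(f)`. -/
def makespan : ℝ := sInf { θ | N.theta0 ≤ θ ∧ f.totalLoad θ = 0 }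

/-- Total travel time `Ψ(f)`. -/
def totalTravelTime : ℝ := ∑ e, ∫ θ in Set.Ici (0:ℝ), f.c e θ * f.fp e θ

/-- The induced subgraph on `T` is sink-like on `[θ1, θ2]`. -/
def SinkLike (T : Finset N.V) (θ1 θ2 : ℝ) : Prop :=
  N.sink ∈ T ∧
  (∀ v ∈ T, ∀ p, N.PhysShortest v p → ∀ e ∈ p, N.src e ∈ T ∧ N.dst e ∈ T) ∧
  (∑ e ∈ N.edgesIn T, f.load e θ1) +
    (∑ e ∈ N.deltaMinus T, (f.Fm e θ2 - f.Fm e θ1)) +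
    (∑ v ∈ T.erase N.sink, ∫ θ in θ1..θ2, N.u v θ) < 1/2

end Flow

end Network



section Aux

open MeasureTheory intervalIntegral Filter

namespace Network
namespace Flow

variable {N : Network} (f : N.Flow)

lemma aux_ae_ne (c : ℝ) : ∀ᵐ x : ℝ, x ≠ c := by
  refine ae_iff.mpr ?_
  simpa using measure_singleton (μ := (volume : Measure ℝ)) c

lemma fp_ii (e : N.E) (a b : ℝ) : IntervalIntegrable (f.fp e) volume a b :=
  intervalIntegrable_iff.mpr <|
    ((f.fp_locInt e).integrableOn_isCompact isCompact_uIcc).mono_set Set.uIoc_subset_uIcc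

lemma fm_ii (e : N.E) (a b : ℝ) : IntervalIntegrable (f.fm e) volume a b :=
  intervalIntegrable_iff.mpr <|
    ((f.fm_locInt e).integrableOn_isCompact isCompact_uIcc).mono_set Set.uIoc_subset_uIcc

lemma Fp_cont (e : N.E) : Continuous (f.Fp e) :=
  intervalIntegral.continuous_primitive (fun a b => f.fp_ii e a b) 0

lemma Fm_cont (e : N.E) : Continuous (f.Fm e) :=
  intervalIntegral.continuous_primitive (fun a b => f.fm_ii e a b) 0

lemma Fp_sub (e : N.E) (a b : ℝ) : f.Fp e b - f.Fp e a = ∫ θ in a..b, f.fp e θ := by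
  rw [Fp, Fp, ← intervalIntegral.integral_add_adjacent_intervals (f.fp_ii e 0 a) (f.fp_ii e a b)]
  ring

lemma Fm_sub (e : N.E) (a b : ℝ) : f.Fm e b - f.Fm e a = ∫ θ in a..b, f.fm e θ := by
  rw [Fm, Fm, ← intervalIntegral.integral_add_adjacent_intervals (f.fm_ii e 0 a) (f.fm_ii e a b)]
  ring

lemma Fp_mono (e : N.E) : Monotone (f.Fp e) := by
  intro a b hab
  have h := f.Fp_sub e a b
  have : 0 ≤ ∫ θ in a..b, f.fp e θ :=
    intervalIntegral.integral_nonneg hab (fun x _ => f.fp_nonneg e x)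
  linarith

lemma Fm_mono (e : N.E) : Monotone (f.Fm e) := by
  intro a b hab
  have h := f.Fm_sub e a b
  have : 0 ≤ ∫ θ in a..b, f.fm e θ :=
    intervalIntegral.integral_nonneg hab (fun x _ => f.fm_nonneg e x)
  linarith

lemma Fm_zero_of_le (hf : f.Feasible) (e : N.E) {θ : ℝ} (hθ : θ ≤ (N.tau e : ℝ)) : f.Fm e θ = 0 := by
  have hcongr : (∫ ζ in (0:ℝ)..θ, f.fm e ζ) = ∫ ζ in (0:ℝ)..θ, (0:ℝ) := by
    apply intervalIntegral.integral_congr_ae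
    filter_upwards [aux_ae_ne (N.tau e : ℝ)] with x hx hmem
    rcases le_total 0 θ with h0 | h0
    · rw [Set.uIoc_of_le h0] at hmem
      exact hf.2.2.1 e x (lt_of_le_of_ne (hmem.2.trans hθ) hx)
    · rw [Set.uIoc_of_ge h0] at hmem
      have h1 : (1:ℝ) ≤ (N.tau e : ℝ) := by exact_mod_cast N.tau_pos e
      exact hf.2.2.1 e x (lt_of_le_of_lt hmem.2 (by linarith))
  rw [Fm, hcongr]
  simp

lemma queue_eq (hf : f.Feasible) (e : N.E) (θ : ℝ) :
    f.queue e θ = ∫ ζ in (0:ℝ)..θ, (f.fp e ζ - f.fm e (ζ + (N.tau e : ℝ))) := by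
  have hshift : IntervalIntegrable (fun ζ => f.fm e (ζ + (N.tau e : ℝ))) volume 0 θ := by
    simpa using (f.fm_ii e (0 + (N.tau e : ℝ)) (θ + (N.tau e : ℝ))).comp_add_right (N.tau e : ℝ)
  rw [intervalIntegral.integral_sub (f.fp_ii e 0 θ) hshift]
  rw [intervalIntegral.integral_comp_add_right (f.fm e) (N.tau e : ℝ)]
  have hsplit : (∫ ζ in (0:ℝ)..(N.tau e : ℝ), f.fm e ζ) +
      (∫ ζ in ((N.tau e : ℝ))..(θ + (N.tau e : ℝ)), f.fm e ζ) = f.Fm e (θ + (N.tau e : ℝ)) :=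
    intervalIntegral.integral_add_adjacent_intervals (f.fm_ii e _ _) (f.fm_ii e _ _)
  have h0 : (∫ ζ in (0:ℝ)..(N.tau e : ℝ), f.fm e ζ) = 0 := by
    have := f.Fm_zero_of_le hf e (le_refl (N.tau e : ℝ))
    rwa [Fm] at this
  rw [queue, Fp, zero_add]
  rw [h0, zero_add] at hsplit
  rw [hsplit]

lemma queue_cont (e : N.E) : Continuous (f.queue e) :=
  (f.Fp_cont e).sub ((f.Fm_cont e).comp (continuous_id.add continuous_const))

lemma load_cont (e : N.E) : Continuous (f.load e) := (f.Fp_cont e).sub (f.Fm_cont e)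

lemma totalLoad_cont : Continuous f.totalLoad :=
  continuous_finset_sum _ (fun e _ => f.load_cont e)

lemma queue_zero (hf : f.Feasible) (e : N.E) : f.queue e 0 = 0 := by
  rw [queue, Fp, intervalIntegral.integral_same, f.Fm_zero_of_le hf e (by simp)]
  ring

lemma queue_nonneg (hf : f.Feasible) (e : N.E) {θ : ℝ} (hθ : 0 ≤ θ) : 0 ≤ f.queue e θ := by
  by_contra hneg
  push_neg at hneg
  set S : Set ℝ := Set.Icc 0 θ ∩ {ζ | 0 ≤ f.queue e ζ} with hS
  have hclosed : IsClosed S := isClosed_Icc.inter (isClosed_le continuous_const (f.queue_cont e))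
  have h0S : (0:ℝ) ∈ S := ⟨⟨le_refl 0, hθ⟩, by simp [f.queue_zero hf e]⟩
  have hbdd : BddAbove S := ⟨θ, fun x hx => hx.1.2⟩
  set s := sSup S with hs
  have hsS : s ∈ S := hclosed.csSup_mem ⟨0, h0S⟩ hbdd
  have hs0 : 0 ≤ s := hsS.1.1
  have hsθ : s ≤ θ := hsS.1.2
  have hsq : 0 ≤ f.queue e s := hsS.2
  have hkey : ∀ᵐ ζ ∂(volume : Measure ℝ), ζ ∈ Set.Ioc s θ →
      0 ≤ f.fp e ζ - f.fm e (ζ + (N.tau e : ℝ)) := by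
    filter_upwards [hf.2.2.2 e] with ζ hζ hmem
    have hζ0 : 0 ≤ ζ := le_trans hs0 hmem.1.le
    have hqneg : f.queue e ζ ≤ 0 := by
      by_contra hq
      push_neg at hq
      have : ζ ∈ S := ⟨⟨hζ0, hmem.2⟩, hq.le⟩
      exact absurd (le_csSup hbdd this) (not_le.mpr hmem.1)
    have := (hζ hζ0).2 hqneg
    rw [this]
    have := min_le_left (f.fp e ζ) ((N.nu e : ℝ))
    linarith
  have hint : 0 ≤ ∫ ζ in s..θ, (f.fp e ζ - f.fm e (ζ + (N.tau e : ℝ))) := by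
    rw [intervalIntegral.integral_of_le hsθ]
    apply MeasureTheory.integral_nonneg_of_ae
    refine (ae_restrict_iff' measurableSet_Ioc).mpr ?_
    filter_upwards [hkey] with ζ h1 hmem using h1 hmem
  have hdiff : f.queue e θ - f.queue e s = ∫ ζ in s..θ, (f.fp e ζ - f.fm e (ζ + (N.tau e : ℝ))) := by
    rw [f.queue_eq hf e θ, f.queue_eq hf e s]
    have hshift : ∀ a b : ℝ, IntervalIntegrable
        (fun ζ => f.fp e ζ - f.fm e (ζ + (N.tau e : ℝ))) volume a b := by
      intro a b
      have h2 := (f.fm_ii e (a + (N.tau e : ℝ)) (b + (N.tau e : ℝ))).comp_add_right ((N.tau e : ℝ))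
      simp only [add_sub_cancel_right] at h2
      exact (f.fp_ii e a b).sub h2
    rw [← intervalIntegral.integral_add_adjacent_intervals (hshift 0 s) (hshift s θ)]
    ring
  linarith

lemma load_sub_queue (e : N.E) (θ : ℝ) :
    f.load e θ - f.queue e θ = f.Fm e (θ + (N.tau e : ℝ)) - f.Fm e θ := by
  rw [load, queue]; ring

lemma load_nonneg (hf : f.Feasible) (e : N.E) {θ : ℝ} (hθ : 0 ≤ θ) : 0 ≤ f.load e θ := by
  have h1 := f.queue_nonneg hf e hθ
  have h2 : f.Fm e θ ≤ f.Fm e (θ + (N.tau e : ℝ)) := f.Fm_mono e (le_add_of_nonneg_right (by positivity))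
  have h3 := f.load_sub_queue e θ
  linarith

lemma totalLoad_anti (hf : f.Feasible) {θ1 θ2 : ℝ} (h1 : N.theta0 ≤ θ1) (h12 : θ1 ≤ θ2) :
    f.totalLoad θ2 ≤ f.totalLoad θ1 := by
  have h0 : (0:ℝ) ≤ θ1 := le_trans N.theta0_nonneg h1
  have hdiff : f.totalLoad θ2 - f.totalLoad θ1
      = ∫ θ in θ1..θ2, (∑ e, (f.fp e θ - f.fm e θ)) := by
    rw [totalLoad, totalLoad, ← Finset.sum_sub_distrib]
    rw [intervalIntegral.integral_finset_sum (fun e _ => (f.fp_ii e θ1 θ2).sub (f.fm_ii e θ1 θ2))]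
    apply Finset.sum_congr rfl
    intro e _
    rw [intervalIntegral.integral_sub (f.fp_ii e θ1 θ2) (f.fm_ii e θ1 θ2),
      ← f.Fp_sub e θ1 θ2, ← f.Fm_sub e θ1 θ2, load, load]
    ring
  have hae : ∀ᵐ θ ∂(volume : Measure ℝ), θ ∈ Set.Ioc θ1 θ2 →
      (∑ e, (f.fp e θ - f.fm e θ)) ≤ 0 := by
    have hcons : ∀ᵐ θ ∂(volume : Measure ℝ), ∀ v : N.V, v ≠ N.sink → 0 ≤ θ →
        (∑ e ∈ N.outEdges v, f.fp e θ) - ∑ e ∈ N.inEdges v, f.fm e θ = N.u v θ := by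
      rw [ae_all_iff]
      intro v
      by_cases hv : v = N.sink
      · exact Filter.Eventually.of_forall (fun θ h => absurd hv h)
      · filter_upwards [hf.1 v hv] with θ h _ using h
    filter_upwards [hcons, hf.2.1] with θ hθv hsink hmem
    have hθ0 : 0 ≤ θ := le_trans h0 hmem.1.le
    have hsum : (∑ e, (f.fp e θ - f.fm e θ))
        = ∑ v : N.V, ((∑ e ∈ N.outEdges v, f.fp e θ) - ∑ e ∈ N.inEdges v, f.fm e θ) := by
      rw [Finset.sum_sub_distrib, Finset.sum_sub_distrib]
      congr 1
      · exact (Finset.sum_fiberwise Finset.univ N.src (fun e => f.fp e θ)).symm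
      · exact (Finset.sum_fiberwise Finset.univ N.dst (fun e => f.fm e θ)).symm
    rw [hsum, ← Finset.sum_erase_add _ _ (Finset.mem_univ N.sink)]
    have hz : ∀ v ∈ Finset.univ.erase N.sink,
        (∑ e ∈ N.outEdges v, f.fp e θ) - ∑ e ∈ N.inEdges v, f.fm e θ = 0 := by
      intro v hv
      rw [hθv v (Finset.ne_of_mem_erase hv) hθ0]
      exact N.u_support v θ (fun hc => absurd hc.2 (not_le.mpr (lt_of_le_of_lt h1 hmem.1)))
    rw [Finset.sum_eq_zero hz, zero_add]
    exact hsink hθ0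
  have hint : (∫ θ in θ1..θ2, (∑ e, (f.fp e θ - f.fm e θ))) ≤ 0 := by
    rw [intervalIntegral.integral_of_le h12]
    apply integral_nonpos_of_ae
    refine (ae_restrict_iff' measurableSet_Ioc).mpr ?_
    filter_upwards [hae] with θ h1 h2 using h1 h2
  linarith

lemma makespan_spec (hf : f.Feasible) (hterm : f.Terminates) :
    N.theta0 ≤ f.makespan ∧ f.totalLoad f.makespan = 0 := by
  have hclosed : IsClosed {θ : ℝ | N.theta0 ≤ θ ∧ f.totalLoad θ = 0} := by
    have : {θ : ℝ | N.theta0 ≤ θ ∧ f.totalLoad θ = 0}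
        = Set.Ici N.theta0 ∩ f.totalLoad ⁻¹' {0} := by
      ext θ; simp [Set.mem_Ici]
    rw [this]
    exact isClosed_Ici.inter (isClosed_singleton.preimage f.totalLoad_cont)
  have hbdd : BddBelow {θ : ℝ | N.theta0 ≤ θ ∧ f.totalLoad θ = 0} := ⟨N.theta0, fun x hx => hx.1⟩
  exact hclosed.csInf_mem hterm hbdd

lemma makespan_nonneg (hf : f.Feasible) (hterm : f.Terminates) : 0 ≤ f.makespan :=
  le_trans N.theta0_nonneg (f.makespan_spec hf hterm).1

lemma totalLoad_zero (hf : f.Feasible) (hterm : f.Terminates) {θ : ℝ} (hθ : f.makespan ≤ θ) :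
    f.totalLoad θ = 0 := by
  obtain ⟨hms, hms0⟩ := f.makespan_spec hf hterm
  have h1 : f.totalLoad θ ≤ 0 := hms0 ▸ f.totalLoad_anti hf hms hθ
  have h2 : 0 ≤ f.totalLoad θ := Finset.sum_nonneg fun e _ =>
    f.load_nonneg hf e (le_trans (f.makespan_nonneg hf hterm) hθ)
  linarith

lemma load_zero (hf : f.Feasible) (hterm : f.Terminates) (e : N.E) {θ : ℝ}
    (hθ : f.makespan ≤ θ) : f.load e θ = 0 := by
  have h0 : 0 ≤ θ := le_trans (f.makespan_nonneg hf hterm) hθ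
  have := f.totalLoad_zero hf hterm hθ
  rw [totalLoad] at this
  exact (Finset.sum_eq_zero_iff_of_nonneg fun e' _ => f.load_nonneg hf e' h0).mp this e
    (Finset.mem_univ e)

lemma queue_zero' (hf : f.Feasible) (hterm : f.Terminates) (e : N.E) {θ : ℝ}
    (hθ : f.makespan ≤ θ) : f.queue e θ = 0 := by
  have h0 : 0 ≤ θ := le_trans (f.makespan_nonneg hf hterm) hθ
  have h1 := f.queue_nonneg hf e h0
  have h2 : f.Fm e θ ≤ f.Fm e (θ + (N.tau e : ℝ)) := f.Fm_mono e (le_add_of_nonneg_right (by positivity))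
  have h3 := f.load_sub_queue e θ
  have h4 := f.load_zero hf hterm e hθ
  linarith

lemma Fm_shift_const (hf : f.Feasible) (hterm : f.Terminates) (e : N.E) {θ : ℝ}
    (hθ : f.makespan ≤ θ) : f.Fm e (θ + (N.tau e : ℝ)) = f.Fm e θ := by
  have h1 := f.queue_zero' hf hterm e hθ
  have h2 := f.load_zero hf hterm e hθ
  rw [queue] at h1; rw [load] at h2
  linarith

lemma Fm_const (hf : f.Feasible) (hterm : f.Terminates) (e : N.E) {θ : ℝ}
    (hθ : f.makespan ≤ θ) : f.Fm e θ = f.Fm e f.makespan := by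
  have htau1 : (1:ℝ) ≤ (N.tau e : ℝ) := by exact_mod_cast N.tau_pos e
  have haux : ∀ n : ℕ, f.Fm e (f.makespan + n * (N.tau e : ℝ)) = f.Fm e f.makespan := by
    intro n
    induction n with
    | zero => simp
    | succ n ih =>
      have harg : f.makespan ≤ f.makespan + n * (N.tau e : ℝ) := le_add_of_nonneg_right (by positivity)
      have := f.Fm_shift_const hf hterm e harg
      rw [show f.makespan + (n+1 : ℕ) * (N.tau e : ℝ)
          = f.makespan + n * (N.tau e : ℝ) + (N.tau e : ℝ) by push_cast; ring]
      rw [this, ih]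
  obtain ⟨n, hn⟩ := exists_nat_ge (θ - f.makespan)
  have hup : θ ≤ f.makespan + n * (N.tau e : ℝ) := by
    have : (n:ℝ) ≤ n * (N.tau e : ℝ) := le_mul_of_one_le_right (Nat.cast_nonneg n) htau1
    linarith
  exact le_antisymm (haux n ▸ f.Fm_mono e hup) (f.Fm_mono e hθ)

lemma Fp_const (hf : f.Feasible) (hterm : f.Terminates) (e : N.E) {θ : ℝ}
    (hθ : f.makespan ≤ θ) : f.Fp e θ = f.Fp e f.makespan := by
  have h1 := f.load_zero hf hterm e hθ
  have h2 := f.load_zero hf hterm e (le_refl f.makespan)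
  rw [load] at h1 h2
  have := f.Fm_const hf hterm e hθ
  linarith

lemma fp_ae_zero (hf : f.Feasible) (hterm : f.Terminates) (e : N.E) :
    ∀ᵐ θ ∂(volume.restrict (Set.Ioi f.makespan)), f.fp e θ = 0 := by
  set ms := f.makespan with hms
  set A : Set ℝ := {θ | ¬ f.fp e θ = 0} with hA
  have hn : ∀ n : ℕ, volume (A ∩ Set.Ioc ms (ms + (n+1 : ℝ))) = 0 := by
    intro n
    have hle : ms ≤ ms + (n+1 : ℝ) := le_add_of_nonneg_right (by positivity)
    have hInt : IntegrableOn (f.fp e) (Set.Ioc ms (ms + (n+1:ℝ))) volume :=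
      intervalIntegrable_iff_integrableOn_Ioc_of_le hle |>.mp (f.fp_ii e _ _)
    have hzero : (∫ θ in Set.Ioc ms (ms + (n+1:ℝ)), f.fp e θ) = 0 := by
      rw [← intervalIntegral.integral_of_le hle, ← f.Fp_sub e ms (ms + (n+1:ℝ)),
        f.Fp_const hf hterm e hle]
      ring
    have := (integral_eq_zero_iff_of_nonneg_ae
      (Filter.Eventually.of_forall (fun θ => f.fp_nonneg e θ)) hInt).mp hzero
    have h2 := ae_iff.mp this
    rwa [Measure.restrict_apply' measurableSet_Ioc] at h2
  have hsub : A ∩ Set.Ioi ms ⊆ ⋃ n : ℕ, (A ∩ Set.Ioc ms (ms + (n+1:ℝ))) := by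
    rintro θ ⟨hθA, hθI⟩
    obtain ⟨n, hn'⟩ := exists_nat_ge (θ - ms)
    exact Set.mem_iUnion.mpr ⟨n, hθA, hθI, by push_cast; linarith⟩
  have hnull : volume (A ∩ Set.Ioi ms) = 0 :=
    measure_mono_null hsub (measure_iUnion_null hn)
  refine ae_iff.mpr ?_
  rwa [Measure.restrict_apply' measurableSet_Ioi]

/-- The key quadratic identity: the integral of a primitive against its own derivative. -/
lemma primitive_self_integral {b : ℝ} (hb : 0 ≤ b) (h : ℝ → ℝ)
    (hi : IntegrableOn h (Set.Ioc 0 b) volume) :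
    ∫ θ in (0:ℝ)..b, (∫ ζ in (0:ℝ)..θ, h ζ) * h θ = (∫ θ in (0:ℝ)..b, h θ)^2 / 2 := by
  set μ := volume.restrict (Set.Ioc (0:ℝ) b) with hμ
  have hμint : Integrable h μ := hi
  set K : ℝ × ℝ → ℝ := fun p => if p.2 ≤ p.1 then h p.1 * h p.2 else 0 with hK
  have hbase : Integrable (fun p : ℝ × ℝ => h p.1 * h p.2) (μ.prod μ) :=
    hμint.mul_prod hμint
  have hKeq : K = Set.indicator {p : ℝ × ℝ | p.2 ≤ p.1} (fun p => h p.1 * h p.2) := by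
    funext p
    simp [hK, Set.indicator_apply, Set.mem_setOf_eq]
  have hKint : Integrable K (μ.prod μ) := by
    rw [hKeq]
    exact hbase.indicator (measurableSet_le measurable_snd measurable_fst)
  have hswap : (∫ p, K p.swap ∂(μ.prod μ)) = ∫ p, K p ∂(μ.prod μ) :=
    integral_prod_swap K
  have hdiagmeas : MeasurableSet {p : ℝ × ℝ | p.1 = p.2} :=
    measurableSet_eq_fun measurable_fst measurable_snd
  have hdiag : (μ.prod μ) {p : ℝ × ℝ | p.1 = p.2} = 0 := by
    rw [Measure.prod_apply hdiagmeas]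
    have : ∀ x : ℝ, μ (Prod.mk x ⁻¹' {p : ℝ × ℝ | p.1 = p.2}) = 0 := by
      intro x
      have : (Prod.mk x ⁻¹' {p : ℝ × ℝ | p.1 = p.2}) = {x} := by
        ext y; simp [eq_comm]
      rw [this]
      exact le_antisymm (le_trans (Measure.restrict_le_self _) (by simp)) zero_le
    simp [this]
  have hdiagint : (∫ p : ℝ × ℝ, (if p.1 = p.2 then h p.1 * h p.2 else 0) ∂(μ.prod μ)) = 0 := by
    apply integral_eq_zero_of_ae
    refine ae_iff.mpr (measure_mono_null ?_ hdiag)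
    intro p hp
    simp only [Set.mem_setOf_eq, Pi.zero_apply] at hp ⊢
    by_contra hc
    exact hp (by simp [hc])
  have hsum : ∀ p : ℝ × ℝ, K p + K p.swap
      = h p.1 * h p.2 + (if p.1 = p.2 then h p.1 * h p.2 else 0) := by
    intro p
    rcases lt_trichotomy p.1 p.2 with hlt | heq | hgt
    · simp only [hK, Prod.fst_swap, Prod.snd_swap]
      rw [if_neg (not_le.mpr hlt), if_pos hlt.le, if_neg (ne_of_lt hlt)]
      ring
    · simp only [hK, Prod.fst_swap, Prod.snd_swap]
      rw [if_pos heq.ge, if_pos heq.le, if_pos heq, heq]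
    · simp only [hK, Prod.fst_swap, Prod.snd_swap]
      rw [if_pos hgt.le, if_neg (not_le.mpr hgt), if_neg (ne_of_gt hgt)]
  have htot : (∫ p : ℝ × ℝ, h p.1 * h p.2 ∂(μ.prod μ)) = (∫ x, h x ∂μ)^2 := by
    rw [integral_prod_mul]; ring
  have h2K : 2 * (∫ p, K p ∂(μ.prod μ)) = (∫ x, h x ∂μ)^2 := by
    have hKswapint : Integrable (fun p : ℝ × ℝ => K p.swap) (μ.prod μ) :=
      hKint.swap
    calc 2 * (∫ p, K p ∂(μ.prod μ))
        = (∫ p, K p ∂(μ.prod μ)) + (∫ p : ℝ × ℝ, K p.swap ∂(μ.prod μ)) := by rw [hswap]; ring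
      _ = ∫ p : ℝ × ℝ, (K p + K p.swap) ∂(μ.prod μ) := (integral_add hKint hKswapint).symm
      _ = ∫ p : ℝ × ℝ, (h p.1 * h p.2 + (if p.1 = p.2 then h p.1 * h p.2 else 0)) ∂(μ.prod μ) := by
          congr 1; funext p; exact hsum p
      _ = (∫ p : ℝ × ℝ, h p.1 * h p.2 ∂(μ.prod μ))
          + ∫ p : ℝ × ℝ, (if p.1 = p.2 then h p.1 * h p.2 else 0) ∂(μ.prod μ) := by
          apply integral_add hbase
          · rw [show (fun p : ℝ × ℝ => if p.1 = p.2 then h p.1 * h p.2 else 0)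
              = Set.indicator {p : ℝ × ℝ | p.1 = p.2} (fun p => h p.1 * h p.2) by
                funext p; simp [Set.indicator_apply, Set.mem_setOf_eq]]
            exact hbase.indicator hdiagmeas
      _ = (∫ x, h x ∂μ)^2 := by rw [htot, hdiagint]; ring
  have hiter : (∫ p, K p ∂(μ.prod μ)) = ∫ x, (∫ y, K (x, y) ∂μ) ∂μ :=
    integral_prod K hKint
  have hinner : ∀ x ∈ Set.Ioc (0:ℝ) b,
      (∫ y, K (x, y) ∂μ) = (∫ ζ in (0:ℝ)..x, h ζ) * h x := by
    intro x hx
    have h1 : (fun y => K (x, y)) = Set.indicator (Set.Iic x) (fun y => h x * h y) := by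
      funext y
      simp [hK, Set.indicator_apply, Set.mem_Iic]
    rw [h1, MeasureTheory.integral_indicator measurableSet_Iic, hμ,
      Measure.restrict_restrict measurableSet_Iic]
    have h2 : Set.Iic x ∩ Set.Ioc 0 b = Set.Ioc 0 x := by
      ext ζ
      constructor
      · rintro ⟨h1', h2', _⟩; exact ⟨h2', h1'⟩
      · rintro ⟨h1', h2'⟩; exact ⟨h2', h1', h2'.trans hx.2⟩
    rw [h2, MeasureTheory.integral_const_mul, ← intervalIntegral.integral_of_le hx.1.le]
    ring
  have houter : (∫ x, (∫ y, K (x, y) ∂μ) ∂μ)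
      = ∫ x in Set.Ioc (0:ℝ) b, (∫ ζ in (0:ℝ)..x, h ζ) * h x := by
    rw [hμ]
    exact setIntegral_congr_fun measurableSet_Ioc (fun x hx => hinner x hx)
  have hfinal : (∫ θ in (0:ℝ)..b, (∫ ζ in (0:ℝ)..θ, h ζ) * h θ)
      = ∫ p, K p ∂(μ.prod μ) := by
    rw [hiter, houter, intervalIntegral.integral_of_le hb]
  rw [hfinal]
  have hμeq : (∫ x, h x ∂μ) = ∫ θ in (0:ℝ)..b, h θ := by
    rw [intervalIntegral.integral_of_le hb, hμ]
  rw [← hμeq]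
  linarith

lemma c_cont (e : N.E) : Continuous (f.c e) :=
  continuous_const.add ((f.queue_cont e).div_const _)

lemma travel_split (hf : f.Feasible) (hterm : f.Terminates) (e : N.E) :
    ∫ θ in Set.Ici (0:ℝ), f.c e θ * f.fp e θ
      = ∫ θ in (0:ℝ)..f.makespan, f.c e θ * f.fp e θ := by
  set ms := f.makespan with hmsdef
  have hms0 : 0 ≤ ms := f.makespan_nonneg hf hterm
  have hunion : Set.Ici (0:ℝ) = Set.Icc 0 ms ∪ Set.Ioi ms := (Set.Icc_union_Ioi_eq_Ici hms0).symm
  have hzero_ae : (fun θ => f.c e θ * f.fp e θ) =ᵐ[volume.restrict (Set.Ioi ms)]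
      (fun _ => (0:ℝ)) := by
    filter_upwards [f.fp_ae_zero hf hterm e] with θ hθ
    simp [hθ]
  have hIntIoi : IntegrableOn (fun θ => f.c e θ * f.fp e θ) (Set.Ioi ms) volume :=
    (integrable_zero _ _ _).congr hzero_ae.symm
  have hintIoi : (∫ θ in Set.Ioi ms, f.c e θ * f.fp e θ) = 0 := by
    rw [integral_congr_ae hzero_ae]
    simp
  have hIntIcc : IntegrableOn (fun θ => f.c e θ * f.fp e θ) (Set.Icc 0 ms) volume := by
    obtain ⟨C, hC⟩ := isCompact_Icc.exists_bound_of_continuousOn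
      ((f.c_cont e).continuousOn : ContinuousOn (f.c e) (Set.Icc 0 ms))
    apply Integrable.bdd_mul ((f.fp_locInt e).integrableOn_isCompact isCompact_Icc)
      ((f.c_cont e).aestronglyMeasurable.restrict)
    refine (ae_restrict_iff' measurableSet_Icc).mpr (Filter.Eventually.of_forall ?_)
    exact fun x hx => hC x hx
  have hdisj : Disjoint (Set.Icc (0:ℝ) ms) (Set.Ioi ms) :=
    Set.disjoint_left.mpr fun x hx hx2 => absurd hx.2 (not_le.mpr hx2)
  rw [hunion, setIntegral_union hdisj measurableSet_Ioi hIntIcc hIntIoi, hintIoi, add_zero,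
    integral_Icc_eq_integral_Ioc, ← intervalIntegral.integral_of_le hms0]

lemma edge_identity (hf : f.Feasible) (hterm : f.Terminates) (e : N.E) :
    ∫ θ in (0:ℝ)..f.makespan, f.c e θ * f.fp e θ
      = ∫ θ in (0:ℝ)..f.makespan, f.load e θ := by
  set ms := f.makespan with hmsdef
  have hms0 : 0 ≤ ms := f.makespan_nonneg hf hterm
  have hνpos : (0:ℝ) < (N.nu e : ℝ) := by exact_mod_cast N.nu_pos e
  set τ : ℝ := (N.tau e : ℝ) with hτdef
  have hτ0 : 0 ≤ τ := Nat.cast_nonneg _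
  set H : ℝ → ℝ := fun ζ => f.fp e ζ - f.fm e (ζ + τ) with hHdef
  have hq_cont := f.queue_cont e
  have hfp := f.fp_ii e 0 ms
  have hshift : IntervalIntegrable (fun ζ => f.fm e (ζ + τ)) volume 0 ms := by
    have h2 := (f.fm_ii e (0 + τ) (ms + τ)).comp_add_right τ
    simpa only [add_sub_cancel_right] using h2
  have hh : IntervalIntegrable H volume 0 ms := hfp.sub hshift
  have hqfp : IntervalIntegrable (fun θ => f.queue e θ * f.fp e θ) volume 0 ms :=
    hfp.continuousOn_mul hq_cont.continuousOn
  have hqH : IntervalIntegrable (fun θ => f.queue e θ * H θ) volume 0 ms :=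
    hh.continuousOn_mul hq_cont.continuousOn
  have hq_ii : IntervalIntegrable (f.queue e) volume 0 ms :=
    hq_cont.intervalIntegrable 0 ms
  -- Step A : expand c
  have stepA : (∫ θ in (0:ℝ)..ms, f.c e θ * f.fp e θ)
      = τ * (∫ θ in (0:ℝ)..ms, f.fp e θ)
        + (1 / (N.nu e : ℝ)) * ∫ θ in (0:ℝ)..ms, f.queue e θ * f.fp e θ := by
    have hpt : ∀ θ, f.c e θ * f.fp e θ
        = τ * f.fp e θ + (1 / (N.nu e : ℝ)) * (f.queue e θ * f.fp e θ) := by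
      intro θ
      rw [c, hτdef]
      field_simp
    rw [intervalIntegral.integral_congr (fun θ _ => hpt θ),
      intervalIntegral.integral_add (hfp.const_mul τ) (hqfp.const_mul _),
      intervalIntegral.integral_const_mul, intervalIntegral.integral_const_mul]
  -- Step B : a.e. identity for the queueing term
  have stepB : (∫ θ in (0:ℝ)..ms, f.queue e θ * f.fp e θ)
      = (∫ θ in (0:ℝ)..ms, f.queue e θ * H θ)
        + (N.nu e : ℝ) * ∫ θ in (0:ℝ)..ms, f.queue e θ := by
    have hcongr : (∫ θ in (0:ℝ)..ms, f.queue e θ * f.fp e θ)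
        = ∫ θ in (0:ℝ)..ms, (f.queue e θ * H θ + (N.nu e : ℝ) * f.queue e θ) := by
      apply intervalIntegral.integral_congr_ae
      filter_upwards [hf.2.2.2 e] with θ hcond hmem
      rw [Set.uIoc_of_le hms0] at hmem
      have hθ0 : 0 ≤ θ := hmem.1.le
      rcases lt_or_ge 0 (f.queue e θ) with hq | hq
      · have hfm := (hcond hθ0).1 hq
        rw [hHdef]
        simp only []
        rw [hfm]
        ring
      · have hq0 : f.queue e θ = 0 := le_antisymm hq (f.queue_nonneg hf e hθ0)
        rw [hq0]
        ring
    rw [hcongr, intervalIntegral.integral_add hqH (hq_ii.const_mul _),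
      intervalIntegral.integral_const_mul]
  -- Step C : the quadratic term vanishes
  have hqms : f.queue e ms = 0 := f.queue_zero' hf hterm e le_rfl
  have stepC : (∫ θ in (0:ℝ)..ms, f.queue e θ * H θ) = 0 := by
    have hHint : IntegrableOn H (Set.Ioc 0 ms) volume :=
      (intervalIntegrable_iff_integrableOn_Ioc_of_le hms0).mp hh
    have hqprim : ∀ θ, f.queue e θ = ∫ ζ in (0:ℝ)..θ, H ζ := fun θ => f.queue_eq hf e θ
    have := primitive_self_integral hms0 H hHint
    rw [intervalIntegral.integral_congr (g := fun θ => (∫ ζ in (0:ℝ)..θ, H ζ) * H θ)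
      (fun θ _ => congrArg (fun z => z * H θ) (hqprim θ)), this, ← hqprim ms, hqms]
    norm_num
  -- Step D : integral of the load
  have hFm_shift_cont : Continuous (fun θ => f.Fm e (θ + τ)) :=
    (f.Fm_cont e).comp (continuous_id.add continuous_const)
  have stepD : (∫ θ in (0:ℝ)..ms, f.load e θ)
      = (∫ θ in (0:ℝ)..ms, f.queue e θ) + τ * f.Fm e ms := by
    have hpt : ∀ θ, f.load e θ = f.queue e θ + (f.Fm e (θ + τ) - f.Fm e θ) := by
      intro θ
      have := f.load_sub_queue e θ
      rw [hτdef]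
      linarith
    rw [intervalIntegral.integral_congr (fun θ _ => hpt θ),
      intervalIntegral.integral_add hq_ii
        ((hFm_shift_cont.intervalIntegrable 0 ms).sub ((f.Fm_cont e).intervalIntegrable 0 ms))]
    congr 1
    rw [intervalIntegral.integral_sub (hFm_shift_cont.intervalIntegrable 0 ms)
      ((f.Fm_cont e).intervalIntegrable 0 ms)]
    rw [intervalIntegral.integral_comp_add_right (f.Fm e) τ, zero_add]
    have hsplit1 : (∫ θ in (0:ℝ)..τ, f.Fm e θ) + (∫ θ in τ..(ms + τ), f.Fm e θ)
        = ∫ θ in (0:ℝ)..(ms + τ), f.Fm e θ :=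
      intervalIntegral.integral_add_adjacent_intervals
        ((f.Fm_cont e).intervalIntegrable 0 τ) ((f.Fm_cont e).intervalIntegrable τ (ms + τ))
    have hsplit2 : (∫ θ in (0:ℝ)..ms, f.Fm e θ) + (∫ θ in ms..(ms + τ), f.Fm e θ)
        = ∫ θ in (0:ℝ)..(ms + τ), f.Fm e θ :=
      intervalIntegral.integral_add_adjacent_intervals
        ((f.Fm_cont e).intervalIntegrable 0 ms) ((f.Fm_cont e).intervalIntegrable ms (ms + τ))
    have hzero1 : (∫ θ in (0:ℝ)..τ, f.Fm e θ) = 0 := by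
      have : Set.EqOn (f.Fm e) (fun _ => (0:ℝ)) (Set.uIcc 0 τ) := by
        intro θ hθ
        rw [Set.uIcc_of_le hτ0] at hθ
        exact f.Fm_zero_of_le hf e hθ.2
      rw [intervalIntegral.integral_congr this]
      simp
    have hzero2 : (∫ θ in ms..(ms + τ), f.Fm e θ) = τ * f.Fm e ms := by
      have : Set.EqOn (f.Fm e) (fun _ => f.Fm e ms) (Set.uIcc ms (ms + τ)) := by
        intro θ hθ
        rw [Set.uIcc_of_le (le_add_of_nonneg_right hτ0)] at hθ
        exact f.Fm_const hf hterm e hθ.1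
      rw [intervalIntegral.integral_congr this]
      simp [mul_comm]
    linarith
  -- Step E : combine
  have hFpFm : f.Fp e ms = f.Fm e ms := by
    have := f.load_zero hf hterm e (le_refl ms)
    rw [load] at this
    linarith
  have hFp_int : (∫ θ in (0:ℝ)..ms, f.fp e θ) = f.Fp e ms := rfl
  rw [stepA, stepB, stepC, stepD, hFp_int, hFpFm]
  field_simp
  ring

end Flow
end Network

end Aux


/-- the total travel time of a terminating feasible flow equals
the integral of the total flow volume up to the makespan. -/
theorem totalTravelTime_eq_integral_totalLoad (N : Network) (hreach : N.Reachable)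
    (f : N.Flow) (hf : f.Feasible) (hterm : f.Terminates) :
    f.totalTravelTime = ∫ θ in (0:ℝ)..f.makespan, f.totalLoad θ := by
  rw [Network.Flow.totalTravelTime]
  have h1 : ∀ e : N.E, (∫ θ in Set.Ici (0:ℝ), f.c e θ * f.fp e θ)
      = ∫ θ in (0:ℝ)..f.makespan, f.load e θ := fun e => by
    rw [f.travel_split hf hterm e, f.edge_identity hf hterm e]
  rw [Finset.sum_congr rfl (fun e _ => h1 e)]
  rw [← intervalIntegral.integral_finset_sum
    (fun e _ => (f.load_cont e).intervalIntegrable 0 f.makespan)]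
  rfl

end
end

section
/- Let f be a feasible flow over time in a single-sink network whose directed graph G is acyclic. Then f terminates, and its makespan satisfies Θ(f) ≤ θ0 + τ(P_max) + U. -/
open MeasureTheory Set

noncomputable section

/-! ### Auxiliary development for the termination theorem -/

namespace TerminationAux

open Network Network.Flow Finset

/-- Interval integral vanishes if the integrand vanishes on the open interval. -/
lemma intervalIntegral_zero_of_Ioo {g : ℝ → ℝ} {a b : ℝ}
    (h : ∀ x, min a b < x → x < max a b → g x = 0) : ∫ x in a..b, g x = 0 := by
  have key : ∀ (a b : ℝ), a ≤ b → (∀ x, a < x → x < b → g x = 0) →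
      ∫ x in a..b, g x = 0 := by
    intro a b hab h
    rw [intervalIntegral.integral_of_le hab, MeasureTheory.integral_Ioc_eq_integral_Ioo]
    rw [MeasureTheory.setIntegral_congr_fun measurableSet_Ioo
      (fun x hx => h x hx.1 hx.2 : Set.EqOn g 0 (Set.Ioo a b))]
    simp
  rcases le_total a b with hab | hab
  · refine key a b hab (fun x h1 h2 => h x ?_ ?_) <;>
      [simpa [min_eq_left hab] using h1; simpa [max_eq_right hab] using h2]
  · rw [intervalIntegral.integral_symm]
    rw [key b a hab (fun x h1 h2 => h x (by simpa [min_eq_right hab] using h1)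
      (by simpa [max_eq_left hab] using h2))]
    simp

lemma ae_shift {P : ℝ → Prop} (h : ∀ᵐ θ ∂(volume : Measure ℝ), P θ) (c : ℝ) :
    ∀ᵐ r ∂(volume : Measure ℝ), P (r + c) := by
  rw [MeasureTheory.ae_iff] at h ⊢
  have : {r : ℝ | ¬P (r + c)} = (· + c) ⁻¹' {θ | ¬P θ} := rfl
  rw [this, measure_preimage_add_right]
  exact h

section Graph

variable {N : Network}

lemma isWalkBetween_append {v m w : N.V} {p q : List N.E}
    (hp : N.IsWalkBetween v m p) (hq : N.IsWalkBetween m w q) :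
    N.IsWalkBetween v w (p ++ q) := by
  induction p generalizing v with
  | nil => cases hp; simpa using hq
  | cons e p ih => exact ⟨hp.1, ih hp.2⟩

lemma isWalkBetween_split {v w : N.V} (p q : List N.E) (h : N.IsWalkBetween v w (p ++ q)) :
    ∃ m, N.IsWalkBetween v m p ∧ N.IsWalkBetween m w q := by
  induction p generalizing v with
  | nil => exact ⟨v, rfl, h⟩
  | cons e p ih =>
      obtain ⟨m, h1, h2⟩ := ih h.2
      exact ⟨m, ⟨h.1, h1⟩, h2⟩

lemma walk_simple (hacyc : N.Acyclic) :
    ∀ (p : List N.E) (v w : N.V), N.IsWalkBetween v w p → (v :: p.map N.dst).Nodup := by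
  intro p
  induction p with
  | nil => intro v w _; simp
  | cons e p ih =>
      intro v w h
      obtain ⟨hsrc, hwalk⟩ := h
      have hnd := ih (N.dst e) w hwalk
      refine List.nodup_cons.2 ⟨?_, hnd⟩
      intro hv
      rcases List.mem_cons.1 hv with hv | hv
      · have : N.IsWalkBetween v v [e] := ⟨hsrc, hv.symm⟩
        simpa using hacyc v [e] this
      · obtain ⟨e', he'p, he'⟩ := List.mem_map.1 hv
        obtain ⟨l₁, l₂, rfl⟩ := List.append_of_mem he'p
        obtain ⟨m, hm1, hm2⟩ := isWalkBetween_split l₁ (e' :: l₂) hwalk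
        have hsingle : N.IsWalkBetween m v [e'] := ⟨hm2.1, he'⟩
        have : N.IsWalkBetween v v (e :: (l₁ ++ [e'])) :=
          ⟨hsrc, isWalkBetween_append hm1 hsingle⟩
        simpa using hacyc v (e :: (l₁ ++ [e'])) this

/-- ℕ-valued length of a path. -/
def natTau (N : Network) (p : List N.E) : ℕ := (p.map N.tau).sum

lemma pathTau_eq_cast (p : List N.E) : N.pathTau p = (natTau N p : ℝ) := by
  induction p with
  | nil => simp [Network.pathTau, natTau]
  | cons e p ih => simp [Network.pathTau, natTau] at ih ⊢; push_cast; rw [ih]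

lemma natTau_le_of_nodup {p : List N.E} (hnd : p.Nodup) : natTau N p ≤ ∑ e, N.tau e := by
  have : natTau N p = ∑ e ∈ p.toFinset, N.tau e := (List.sum_toFinset _ hnd).symm
  rw [this]
  exact Finset.sum_le_sum_of_subset (Finset.subset_univ _)

/-- Values of walks from `v` to the sink. -/
def dSet (N : Network) (v : N.V) : Set ℕ := {n | ∃ p, N.IsWalk v p ∧ n = natTau N p}

lemma dSet_nonempty (hreach : N.Reachable) (v : N.V) : (dSet N v).Nonempty := by
  obtain ⟨p, hp⟩ := hreach v
  exact ⟨natTau N p, p, hp, rfl⟩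

lemma dSet_bddAbove (hacyc : N.Acyclic) (v : N.V) : BddAbove (dSet N v) := by
  refine ⟨∑ e, N.tau e, ?_⟩
  rintro n ⟨p, hp, rfl⟩
  have hnd := walk_simple hacyc p v N.sink hp
  exact natTau_le_of_nodup ((List.nodup_cons.1 hnd).2.of_map)

/-- Longest-walk distance to the sink. -/
noncomputable def natD (N : Network) (v : N.V) : ℕ := sSup (dSet N v)

lemma natD_mem (hreach : N.Reachable) (hacyc : N.Acyclic) (v : N.V) :
    natD N v ∈ dSet N v :=
  Nat.sSup_mem (dSet_nonempty hreach v) (dSet_bddAbove hacyc v)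

lemma le_natD (hacyc : N.Acyclic) {v : N.V} {n : ℕ} (hn : n ∈ dSet N v) : n ≤ natD N v :=
  le_csSup (dSet_bddAbove hacyc v) hn

lemma natD_edge (hreach : N.Reachable) (hacyc : N.Acyclic) (e : N.E) :
    N.tau e + natD N (N.dst e) ≤ natD N (N.src e) := by
  obtain ⟨p, hp, hval⟩ := natD_mem hreach hacyc (N.dst e)
  refine le_natD hacyc ⟨e :: p, ⟨rfl, hp⟩, ?_⟩
  simp [natTau, hval]

lemma natD_sink (hacyc : N.Acyclic) : natD N N.sink = 0 := by
  have : dSet N N.sink = {0} := by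
    ext n
    constructor
    · rintro ⟨p, hp, rfl⟩
      have := hacyc N.sink p hp
      subst this
      simp [natTau]
    · rintro rfl
      exact ⟨[], rfl, rfl⟩
  simp [natD, this]

/-- Maximal distance. -/
noncomputable def bigK (N : Network) : ℕ := Finset.univ.sup (natD N)

lemma natD_le_bigK (v : N.V) : natD N v ≤ bigK N := Finset.le_sup (Finset.mem_univ v)

lemma tauPmax_bddAbove :
    BddAbove { x | ∃ v p, N.IsWalk v p ∧ (v :: p.map N.dst).Nodup ∧ x = N.pathTau p } := by
  refine ⟨N.tauSum, ?_⟩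
  rintro x ⟨v, p, _, hnd, rfl⟩
  rw [pathTau_eq_cast]
  have h1 : natTau N p ≤ ∑ e, N.tau e :=
    natTau_le_of_nodup ((List.nodup_cons.1 hnd).2.of_map)
  calc ((natTau N p : ℝ)) ≤ ((∑ e, N.tau e : ℕ) : ℝ) := by exact_mod_cast h1
    _ = N.tauSum := by simp [Network.tauSum]

lemma tauPmax_nonneg : 0 ≤ N.tauPmax := by
  have h0 : (0:ℝ) ∈ { x | ∃ v p, N.IsWalk v p ∧ (v :: p.map N.dst).Nodup ∧ x = N.pathTau p } :=
    ⟨N.sink, [], rfl, by simp, by simp [Network.pathTau]⟩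
  exact le_csSup tauPmax_bddAbove h0

lemma bigK_le_tauPmax (hreach : N.Reachable) (hacyc : N.Acyclic) :
    (bigK N : ℝ) ≤ N.tauPmax := by
  obtain ⟨v, _, hv⟩ := Finset.exists_mem_eq_sup Finset.univ ⟨N.sink, Finset.mem_univ _⟩ (natD N)
  obtain ⟨p, hp, hval⟩ := natD_mem hreach hacyc v
  have hmem : ((natD N v : ℝ)) ∈
      { x | ∃ v p, N.IsWalk v p ∧ (v :: p.map N.dst).Nodup ∧ x = N.pathTau p } := by
    refine ⟨v, p, hp, walk_simple hacyc p v N.sink hp, ?_⟩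
    rw [pathTau_eq_cast, hval]
  have := le_csSup tauPmax_bddAbove hmem
  have hb : bigK N = natD N v := hv
  rw [hb]
  exact_mod_cast this

lemma outEdges_sink_empty (hreach : N.Reachable) (hacyc : N.Acyclic) :
    N.outEdges N.sink = ∅ := by
  rw [Finset.eq_empty_iff_forall_notMem]
  intro e he
  rw [Network.outEdges, Finset.mem_filter] at he
  obtain ⟨p, hp⟩ := hreach (N.dst e)
  have : N.IsWalkBetween N.sink N.sink (e :: p) := ⟨he.2, hp⟩
  simpa using hacyc N.sink (e :: p) this

end Graph

section FlowBasics

variable {N : Network} (f : N.Flow)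

lemma fp_intInt (e : N.E) (a b : ℝ) : IntervalIntegrable (f.fp e) volume a b :=
  ((f.fp_locInt e).integrableOn_isCompact isCompact_uIcc).intervalIntegrable

lemma fm_intInt (e : N.E) (a b : ℝ) : IntervalIntegrable (f.fm e) volume a b :=
  ((f.fm_locInt e).integrableOn_isCompact isCompact_uIcc).intervalIntegrable

lemma Fp_continuous (e : N.E) : Continuous (f.Fp e) :=
  intervalIntegral.continuous_primitive (fun _ _ => fp_intInt f e _ _) 0

lemma Fm_continuous (e : N.E) : Continuous (f.Fm e) :=
  intervalIntegral.continuous_primitive (fun _ _ => fm_intInt f e _ _) 0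

lemma Fp_sub (e : N.E) (a b : ℝ) : f.Fp e b - f.Fp e a = ∫ r in a..b, f.fp e r := by
  rw [Network.Flow.Fp, Network.Flow.Fp,
    intervalIntegral.integral_interval_sub_left (fp_intInt f e 0 b) (fp_intInt f e 0 a)]

lemma Fm_sub (e : N.E) (a b : ℝ) : f.Fm e b - f.Fm e a = ∫ r in a..b, f.fm e r := by
  rw [Network.Flow.Fm, Network.Flow.Fm,
    intervalIntegral.integral_interval_sub_left (fm_intInt f e 0 b) (fm_intInt f e 0 a)]

lemma fm_shift_intInt (e : N.E) (a b c : ℝ) :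
    IntervalIntegrable (fun r => f.fm e (r + c)) volume a b := by
  simpa using (fm_intInt f e (a + c) (b + c)).comp_add_right c

lemma Fm_shift_sub (e : N.E) (a b c : ℝ) :
    f.Fm e (b + c) - f.Fm e (a + c) = ∫ r in a..b, f.fm e (r + c) := by
  rw [intervalIntegral.integral_comp_add_right (f.fm e) c, ← Fm_sub]

lemma Fp_mono (e : N.E) : Monotone (f.Fp e) := by
  intro a b hab
  have : 0 ≤ f.Fp e b - f.Fp e a := by
    rw [Fp_sub]
    exact intervalIntegral.integral_nonneg hab (fun r _ => f.fp_nonneg e r)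
  linarith

lemma Fm_mono (e : N.E) : Monotone (f.Fm e) := by
  intro a b hab
  have : 0 ≤ f.Fm e b - f.Fm e a := by
    rw [Fm_sub]
    exact intervalIntegral.integral_nonneg hab (fun r _ => f.fm_nonneg e r)
  linarith

lemma Fp_zero_of_nonpos (e : N.E) {θ : ℝ} (hθ : θ ≤ 0) : f.Fp e θ = 0 := by
  refine intervalIntegral_zero_of_Ioo (fun x _ hx2 => f.fp_zero e x ?_)
  have : max 0 θ = 0 := by simp [hθ]
  rw [this] at hx2
  exact hx2

lemma Fm_zero_of_le_tau (e : N.E) (hf : f.Feasible) {θ : ℝ} (hθ : θ ≤ (N.tau e : ℝ)) :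
    f.Fm e θ = 0 := by
  have htau : (1:ℝ) ≤ (N.tau e : ℝ) := by exact_mod_cast N.tau_pos e
  refine intervalIntegral_zero_of_Ioo (fun x _ hx2 => hf.2.2.1 e x ?_)
  have : max (0:ℝ) θ ≤ (N.tau e : ℝ) := by
    rcases le_total 0 θ with h | h
    · simpa [max_eq_right h] using hθ
    · rw [max_eq_left h]; positivity
  linarith

lemma queue_zero_of_nonpos (e : N.E) (hf : f.Feasible) {θ : ℝ} (hθ : θ ≤ 0) :
    f.queue e θ = 0 := by
  rw [Network.Flow.queue, Fp_zero_of_nonpos f e hθ, Fm_zero_of_le_tau f e hf (by linarith)]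
  ring

lemma queue_continuous (e : N.E) : Continuous (f.queue e) := by
  exact (Fp_continuous f e).sub ((Fm_continuous f e).comp (by continuity))

lemma queue_nonneg (e : N.E) (hf : f.Feasible) (θ : ℝ) : 0 ≤ f.queue e θ := by
  by_contra hneg
  push_neg at hneg
  have hθpos : 0 < θ := by
    by_contra h
    push_neg at h
    rw [queue_zero_of_nonpos f e hf h] at hneg
    linarith
  set S : Set ℝ := {s | s ∈ Set.Icc 0 θ ∧ 0 ≤ f.queue e s} with hS
  have hne : S.Nonempty := ⟨0, ⟨le_refl 0, le_of_lt hθpos⟩, by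
    rw [queue_zero_of_nonpos f e hf (le_refl 0)]⟩
  have hbdd : BddAbove S := ⟨θ, fun x hx => hx.1.2⟩
  have hclosed : IsClosed S := by
    have : S = Set.Icc 0 θ ∩ {s | 0 ≤ f.queue e s} := rfl
    rw [this]
    exact isClosed_Icc.inter (isClosed_le continuous_const (queue_continuous f e))
  set s := sSup S with hs
  have hsS : s ∈ S := hclosed.csSup_mem hne hbdd
  have hsθ : s ≤ θ := hsS.1.2
  have hneg' : ∀ r, s < r → r ≤ θ → f.queue e r < 0 := by
    intro r hr1 hr2
    by_contra h
    push_neg at h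
    have : r ∈ S := ⟨⟨le_trans hsS.1.1 (le_of_lt hr1), hr2⟩, h⟩
    exact absurd (le_csSup hbdd this) (not_le.2 hr1)
  -- q θ - q s = ∫_s^θ (fp - fm (·+τ)) ≥ 0
  have hkey : f.queue e θ - f.queue e s = ∫ r in s..θ, (f.fp e r - f.fm e (r + N.tau e)) := by
    rw [intervalIntegral.integral_sub (fp_intInt f e s θ) (fm_shift_intInt f e s θ _)]
    rw [Network.Flow.queue, Network.Flow.queue, ← Fp_sub, ← Fm_shift_sub]
    ring
  have hae := hf.2.2.2 e
  have hae2 : ∀ᵐ r ∂(volume : Measure ℝ), r ∈ Set.Icc s θ →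
      0 ≤ f.fp e r - f.fm e (r + N.tau e) := by
    filter_upwards [hae, MeasureTheory.ae_iff.2 (by simp : volume {r : ℝ | ¬ r ≠ s} = 0)]
      with r hr hrs hrI
    have hr0 : 0 ≤ r := le_trans hsS.1.1 hrI.1
    rcases eq_or_lt_of_le hrI.1 with heq | hlt
    · exact absurd heq.symm hrs
    · have hq : f.queue e r ≤ 0 := le_of_lt (hneg' r hlt hrI.2)
      have := ((hr hr0).2 hq)
      rw [this]
      have := min_le_left (f.fp e r) ((N.nu e : ℝ))
      linarith
  have : 0 ≤ f.queue e θ - f.queue e s := by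
    rw [hkey]
    refine intervalIntegral.integral_nonneg_of_ae_restrict hsθ ?_
    exact (MeasureTheory.ae_restrict_iff' measurableSet_Icc).2 hae2
  have := hsS.2
  linarith

lemma load_nonneg (e : N.E) (hf : f.Feasible) (θ : ℝ) : 0 ≤ f.load e θ := by
  have hq := queue_nonneg f e hf (θ - N.tau e)
  rw [Network.Flow.queue] at hq
  have harg : θ - (N.tau e : ℝ) + (N.tau e : ℝ) = θ := by ring
  rw [harg] at hq
  have := Fp_mono f e (by linarith : θ - (N.tau e : ℝ) ≤ θ)
  rw [Network.Flow.load]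
  linarith

lemma totalLoad_nonneg (hf : f.Feasible) (θ : ℝ) : 0 ≤ f.totalLoad θ :=
  Finset.sum_nonneg (fun e _ => load_nonneg f e hf θ)

end FlowBasics

section Conservation

variable {N : Network} (f : N.Flow)

lemma u_intInt (v : N.V) (a b : ℝ) : IntervalIntegrable (N.u v) volume a b :=
  (N.u_integrable v).intervalIntegrable

lemma u_int_zero (v : N.V) {a b : ℝ} (hθ0 : N.theta0 ≤ a) (hab : a ≤ b) :
    ∫ r in a..b, N.u v r = 0 := by
  refine intervalIntegral_zero_of_Ioo (fun x hx1 _ => N.u_support v x ?_)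
  intro hmem
  have h2 := hmem.2
  have : min a b = a := min_eq_left hab
  rw [this] at hx1
  have h0 := N.theta0_nonneg
  linarith

lemma cons_int (hf : f.Feasible) {v : N.V} (hv : v ≠ N.sink) {a b : ℝ}
    (h0 : 0 ≤ a) (hab : a ≤ b) :
    ∑ e ∈ N.outEdges v, (f.Fp e b - f.Fp e a)
      = (∑ e ∈ N.inEdges v, (f.Fm e b - f.Fm e a)) + ∫ r in a..b, N.u v r := by
  have hL : ∑ e ∈ N.outEdges v, (f.Fp e b - f.Fp e a)
      = ∫ r in a..b, (∑ e ∈ N.outEdges v, f.fp e r) := by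
    rw [intervalIntegral.integral_finset_sum (fun e _ => fp_intInt f e a b)]
    exact Finset.sum_congr rfl (fun e _ => Fp_sub f e a b)
  have hR : ∑ e ∈ N.inEdges v, (f.Fm e b - f.Fm e a)
      = ∫ r in a..b, (∑ e ∈ N.inEdges v, f.fm e r) := by
    rw [intervalIntegral.integral_finset_sum (fun e _ => fm_intInt f e a b)]
    exact Finset.sum_congr rfl (fun e _ => Fm_sub f e a b)
  have hsub : ∑ e ∈ N.outEdges v, (f.Fp e b - f.Fp e a)
      - ∑ e ∈ N.inEdges v, (f.Fm e b - f.Fm e a)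
      = ∫ r in a..b, ((∑ e ∈ N.outEdges v, f.fp e r) - ∑ e ∈ N.inEdges v, f.fm e r) := by
    have h1 : IntervalIntegrable (fun r => ∑ e ∈ N.outEdges v, f.fp e r) volume a b := by
      have h := IntervalIntegrable.sum (μ := volume) (a := a) (b := b)
        (N.outEdges v) (fun e _ => fp_intInt f e a b)
      have hfun : (fun r => ∑ e ∈ N.outEdges v, f.fp e r)
          = (∑ i ∈ N.outEdges v, f.fp i) := by ext r; simp
      rw [hfun]; exact h
    have h2 : IntervalIntegrable (fun r => ∑ e ∈ N.inEdges v, f.fm e r) volume a b := by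
      have h := IntervalIntegrable.sum (μ := volume) (a := a) (b := b)
        (N.inEdges v) (fun e _ => fm_intInt f e a b)
      have hfun : (fun r => ∑ e ∈ N.inEdges v, f.fm e r)
          = (∑ i ∈ N.inEdges v, f.fm i) := by ext r; simp
      rw [hfun]; exact h
    rw [hL, hR]
    exact (intervalIntegral.integral_sub h1 h2).symm
  have hcong : ∫ r in a..b, ((∑ e ∈ N.outEdges v, f.fp e r) - ∑ e ∈ N.inEdges v, f.fm e r)
      = ∫ r in a..b, N.u v r := by
    rw [intervalIntegral.integral_of_le hab, intervalIntegral.integral_of_le hab]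
    refine MeasureTheory.integral_congr_ae
      ((MeasureTheory.ae_restrict_iff' measurableSet_Ioc).2 ?_)
    filter_upwards [hf.1 v hv] with r hr hrI
    exact hr (le_trans h0 (le_of_lt hrI.1))
  linarith [hsub, hcong]

end Conservation

section Levels

variable {N : Network} (f : N.Flow)

/-- Level of an edge. -/
noncomputable def hE (N : Network) (e : N.E) : ℕ := N.tau e + natD N (N.dst e)

/-- Boundary shift of an edge at level `k`. -/
noncomputable def dlt (N : Network) (k : ℕ) (e : N.E) : ℕ :=
  min (N.tau e) (k - natD N (N.dst e))

/-- Edges (partially) above level `k`. -/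
noncomputable def Ek (N : Network) (k : ℕ) : Finset N.E :=
  Finset.univ.filter (fun e => k ≤ hE N e)

/-- Boundary edges of level `k`. -/
noncomputable def Bk (N : Network) (k : ℕ) : Finset N.E :=
  Finset.univ.filter (fun e => k ≤ hE N e ∧ natD N (N.dst e) < k)

/-- Mass above level `k`. -/
noncomputable def Lk (f : N.Flow) (k : ℕ) (θ : ℝ) : ℝ :=
  ∑ e ∈ Ek N k, (f.Fp e θ - f.Fm e (θ + (dlt N k e : ℝ)))

lemma dlt_eq_zero {k : ℕ} {e : N.E} (h : k ≤ natD N (N.dst e)) : dlt N k e = 0 := by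
  simp [dlt, Nat.sub_eq_zero_of_le h]

lemma Lk_continuous (k : ℕ) : Continuous (Lk f k) := by
  apply continuous_finset_sum
  intro e _
  exact (Fp_continuous f e).sub ((Fm_continuous f e).comp (by continuity))

lemma Lk_le_totalLoad (k : ℕ) (hf : f.Feasible) (θ : ℝ) : Lk f k θ ≤ f.totalLoad θ := by
  have h1 : Lk f k θ ≤ ∑ e ∈ Ek N k, f.load e θ := by
    refine Finset.sum_le_sum (fun e _ => ?_)
    have := Fm_mono f e (le_add_of_nonneg_right (Nat.cast_nonneg (dlt N k e)) : θ ≤ θ + (dlt N k e : ℝ))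
    rw [Network.Flow.load]
    linarith
  have h2 : ∑ e ∈ Ek N k, f.load e θ ≤ f.totalLoad θ := by
    refine Finset.sum_le_sum_of_subset_of_nonneg (Finset.subset_univ _) ?_
    intro e _ _
    exact load_nonneg f e hf θ
  linarith

lemma Fm_nonneg' (e : N.E) {θ : ℝ} (hθ : 0 ≤ θ) : 0 ≤ f.Fm e θ := by
  have h0 : f.Fm e 0 = 0 := intervalIntegral.integral_same
  have := Fm_mono f e hθ
  linarith

lemma Fp_eq_zero_at_zero (e : N.E) : f.Fp e 0 = 0 := intervalIntegral.integral_same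

lemma cumInflow_mono (v : N.V) {θ : ℝ} (hθ : 0 ≤ θ) :
    N.cumInflow v θ ≤ N.cumInflow v N.theta0 := by
  rcases le_total θ N.theta0 with h | h
  · have : N.cumInflow v N.theta0 - N.cumInflow v θ = ∫ r in θ..N.theta0, N.u v r := by
      rw [Network.cumInflow, Network.cumInflow,
        intervalIntegral.integral_interval_sub_left (u_intInt v 0 N.theta0) (u_intInt v 0 θ)]
    have hnn : 0 ≤ ∫ r in θ..N.theta0, N.u v r :=
      intervalIntegral.integral_nonneg h (fun r _ => N.u_nonneg v r)
    linarith
  · have hsplit : N.cumInflow v θ - N.cumInflow v N.theta0 = ∫ r in N.theta0..θ, N.u v r := by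
      rw [Network.cumInflow, Network.cumInflow,
        intervalIntegral.integral_interval_sub_left (u_intInt v 0 θ) (u_intInt v 0 N.theta0)]
    rw [u_int_zero v (le_refl _) h] at hsplit
    linarith

lemma totalLoad_le_totalInflow (hreach : N.Reachable) (hacyc : N.Acyclic)
    (hf : f.Feasible) {θ : ℝ} (hθ : 0 ≤ θ) : f.totalLoad θ ≤ N.totalInflow := by
  classical
  have h1 : ∑ e, f.Fp e θ = ∑ v, ∑ e ∈ N.outEdges v, f.Fp e θ := by
    simp only [Network.outEdges]
    exact (Finset.sum_fiberwise Finset.univ N.src (fun e => f.Fp e θ)).symm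
  have h2 : ∑ e, f.Fm e θ = ∑ v, ∑ e ∈ N.inEdges v, f.Fm e θ := by
    simp only [Network.inEdges]
    exact (Finset.sum_fiberwise Finset.univ N.dst (fun e => f.Fm e θ)).symm
  have hpart : f.totalLoad θ
      = ∑ v, ((∑ e ∈ N.outEdges v, f.Fp e θ) - ∑ e ∈ N.inEdges v, f.Fm e θ) := by
    rw [Network.Flow.totalLoad, Finset.sum_sub_distrib]
    simp only [Network.Flow.load, Finset.sum_sub_distrib]
    rw [← h1, ← h2]
  have hsum : ∑ v ∈ Finset.univ.erase N.sink,
        ((∑ e ∈ N.outEdges v, f.Fp e θ) - ∑ e ∈ N.inEdges v, f.Fm e θ)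
      + ((∑ e ∈ N.outEdges N.sink, f.Fp e θ) - ∑ e ∈ N.inEdges N.sink, f.Fm e θ)
      = ∑ v, ((∑ e ∈ N.outEdges v, f.Fp e θ) - ∑ e ∈ N.inEdges v, f.Fm e θ) :=
    Finset.sum_erase_add _ _ (Finset.mem_univ _)
  have hsink : (∑ e ∈ N.outEdges N.sink, f.Fp e θ) - ∑ e ∈ N.inEdges N.sink, f.Fm e θ ≤ 0 := by
    rw [outEdges_sink_empty hreach hacyc]
    simp only [Finset.sum_empty, zero_sub, neg_nonpos]
    exact Finset.sum_nonneg (fun e _ => Fm_nonneg' f e hθ)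
  have hother : ∀ v ∈ Finset.univ.erase N.sink,
      (∑ e ∈ N.outEdges v, f.Fp e θ) - ∑ e ∈ N.inEdges v, f.Fm e θ
        ≤ N.cumInflow v N.theta0 := by
    intro v hv
    have hvne : v ≠ N.sink := (Finset.mem_erase.1 hv).1
    have hc := cons_int f hf hvne (le_refl (0:ℝ)) hθ
    simp only [Fp_eq_zero_at_zero f, sub_zero] at hc
    have h0' : ∑ e ∈ N.inEdges v, (f.Fm e θ - f.Fm e 0) = ∑ e ∈ N.inEdges v, f.Fm e θ :=
      Finset.sum_congr rfl (fun e _ => by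
        rw [show f.Fm e 0 = 0 from intervalIntegral.integral_same, sub_zero])
    rw [h0'] at hc
    have hcu := cumInflow_mono v hθ
    rw [Network.cumInflow] at hcu
    linarith [hc, hcu]
  calc f.totalLoad θ
      = ∑ v ∈ Finset.univ.erase N.sink,
          ((∑ e ∈ N.outEdges v, f.Fp e θ) - ∑ e ∈ N.inEdges v, f.Fm e θ)
        + ((∑ e ∈ N.outEdges N.sink, f.Fp e θ) - ∑ e ∈ N.inEdges N.sink, f.Fm e θ) := by
        rw [hsum, ← hpart]
    _ ≤ ∑ v ∈ Finset.univ.erase N.sink, N.cumInflow v N.theta0 + 0 :=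
        add_le_add (Finset.sum_le_sum hother) hsink
    _ = N.totalInflow := by rw [add_zero]; rfl

lemma Lk_zero_eq (θ : ℝ) : Lk f 0 θ = f.totalLoad θ := by
  rw [Lk, Network.Flow.totalLoad]
  rw [show Ek N 0 = Finset.univ from by simp [Ek]]
  refine Finset.sum_congr rfl (fun e _ => ?_)
  simp [dlt, Network.Flow.load]

lemma hE_le_bigK (hreach : N.Reachable) (hacyc : N.Acyclic) (e : N.E) :
    hE N e ≤ bigK N :=
  le_trans (natD_edge hreach hacyc e) (natD_le_bigK (N.src e))

lemma Ek_empty_of_lt {k : ℕ} (hreach : N.Reachable) (hacyc : N.Acyclic)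
    (hk : bigK N < k) : Ek N k = ∅ := by
  rw [Finset.eq_empty_iff_forall_notMem]
  intro e he
  rw [Ek, Finset.mem_filter] at he
  have := hE_le_bigK hreach hacyc e
  omega

end Levels

section MainLemmas

variable {N : Network} (f : N.Flow)

lemma mem_Ek {k : ℕ} {e : N.E} : e ∈ Ek N k ↔ k ≤ N.tau e + natD N (N.dst e) := by
  simp only [Ek, Finset.mem_filter, Finset.mem_univ, true_and]; exact Iff.rfl

lemma mem_Bk {k : ℕ} {e : N.E} :
    e ∈ Bk N k ↔ k ≤ N.tau e + natD N (N.dst e) ∧ natD N (N.dst e) < k := by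
  simp only [Bk, Finset.mem_filter, Finset.mem_univ, true_and]; exact Iff.rfl

lemma Acase (hreach : N.Reachable) (hacyc : N.Acyclic) (hf : f.Feasible) (k : ℕ)
    {x1 x2 : ℝ} (h0 : N.theta0 ≤ x1) (hx : x1 ≤ x2)
    (hbusy : ∀ r ∈ Set.Ioc x1 x2, ∃ e ∈ Bk N k,
      0 < f.queue e (r + (dlt N k e : ℝ) - (N.tau e : ℝ))) :
    Lk f k x2 ≤ Lk f k x1 - (x2 - x1) := by
  classical
  set G : ℝ → ℝ := fun r => ∑ e ∈ Ek N k, (f.fp e r - f.fm e (r + (dlt N k e : ℝ))) with hG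
  have hGint : IntervalIntegrable G volume x1 x2 := by
    have h := IntervalIntegrable.sum (μ := volume) (a := x1) (b := x2) (Ek N k)
      (f := fun e r => f.fp e r - f.fm e (r + (dlt N k e : ℝ)))
      (fun e _ => (fp_intInt f e x1 x2).sub (fm_shift_intInt f e x1 x2 ((dlt N k e : ℝ))))
    have hfun : G = (∑ e ∈ Ek N k,
        fun r => (f.fp e r - f.fm e (r + (dlt N k e : ℝ)))) := by
      ext r; simp [hG]
    rw [hfun]; exact h
  have hdiff : Lk f k x2 - Lk f k x1 = ∫ r in x1..x2, G r := by
    rw [hG]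
    rw [intervalIntegral.integral_finset_sum (f := fun e r => f.fp e r - f.fm e (r + (dlt N k e : ℝ)))
      (fun e (_ : e ∈ Ek N k) =>
      (fp_intInt f e x1 x2).sub (fm_shift_intInt f e x1 x2 ((dlt N k e : ℝ))))]
    rw [Lk, Lk, ← Finset.sum_sub_distrib]
    refine Finset.sum_congr rfl (fun e _ => ?_)
    rw [intervalIntegral.integral_sub (fp_intInt f e x1 x2)
      (fm_shift_intInt f e x1 x2 ((dlt N k e : ℝ)))]
    rw [← Fp_sub, ← Fm_shift_sub]
    ring
  have hθ00 := N.theta0_nonneg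
  have haeCons : ∀ᵐ r ∂(volume : Measure ℝ), ∀ v : N.V, v ≠ N.sink → (0 ≤ r →
      (∑ e ∈ N.outEdges v, f.fp e r) - ∑ e ∈ N.inEdges v, f.fm e r = N.u v r) := by
    rw [MeasureTheory.ae_all_iff]
    intro v
    by_cases hv : v = N.sink
    · filter_upwards with r hv'
      exact absurd hv hv'
    · filter_upwards [hf.1 v hv] with r h _
      exact h
  have haeQ : ∀ᵐ r ∂(volume : Measure ℝ), ∀ e : N.E,
      (0 ≤ r + ((dlt N k e : ℝ) - (N.tau e : ℝ)) →
        (0 < f.queue e (r + ((dlt N k e : ℝ) - (N.tau e : ℝ))) →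
          f.fm e (r + ((dlt N k e : ℝ) - (N.tau e : ℝ)) + (N.tau e : ℝ)) = (N.nu e : ℝ))) := by
    rw [MeasureTheory.ae_all_iff]
    intro e
    have h := ae_shift (hf.2.2.2 e) ((dlt N k e : ℝ) - (N.tau e : ℝ))
    filter_upwards [h] with r h1 h2 h3
    exact (h1 h2).1 h3
  have haeNe : ∀ᵐ r ∂(volume : Measure ℝ), r ≠ x1 := by
    refine MeasureTheory.ae_iff.2 ?_
    have hset : {r : ℝ | ¬ r ≠ x1} = {x1} := by ext; simp
    rw [hset]
    exact Real.volume_singleton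
  have key : ∀ᵐ r ∂(volume : Measure ℝ), r ∈ Set.Icc x1 x2 → G r ≤ -1 := by
    filter_upwards [haeCons, haeQ, haeNe] with r hcons hQ hne hI
    have hrgt : x1 < r := lt_of_le_of_ne hI.1 (Ne.symm hne)
    have hr0 : (0:ℝ) ≤ r := by linarith
    have hrθ0 : N.theta0 < r := by linarith
    have hstep1a : ∑ e ∈ Ek N k, f.fp e r
        ≤ ∑ e ∈ Finset.univ.filter (fun e => k ≤ natD N (N.src e)), f.fp e r := by
      refine Finset.sum_le_sum_of_subset_of_nonneg ?_ (fun e _ _ => f.fp_nonneg e r)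
      intro e he
      rw [Finset.mem_filter]
      refine ⟨Finset.mem_univ _, ?_⟩
      have h1 := mem_Ek.1 he
      have h2 := natD_edge hreach hacyc e
      omega
    have hfib1 : ∑ v ∈ Finset.univ.filter (fun v => k ≤ natD N v),
          ∑ e ∈ Finset.univ.filter (fun e => N.src e = v), f.fp e r
        = ∑ e ∈ Finset.univ.filter (fun e => k ≤ natD N (N.src e)), f.fp e r := by
      rw [Finset.sum_fiberwise_eq_sum_filter]
      simp
    have hfib2 : ∑ v ∈ Finset.univ.filter (fun v => k ≤ natD N v),
          ∑ e ∈ Finset.univ.filter (fun e => N.dst e = v), f.fm e r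
        = ∑ e ∈ Finset.univ.filter (fun e => k ≤ natD N (N.dst e)), f.fm e r := by
      rw [Finset.sum_fiberwise_eq_sum_filter]
      simp
    have hperv : ∀ v ∈ Finset.univ.filter (fun v => k ≤ natD N v),
        ∑ e ∈ Finset.univ.filter (fun e => N.src e = v), f.fp e r
          ≤ ∑ e ∈ Finset.univ.filter (fun e => N.dst e = v), f.fm e r := by
      intro v _
      by_cases hvs : v = N.sink
      · have hz : Finset.univ.filter (fun e => N.src e = v) = ∅ := by
          rw [hvs]
          exact outEdges_sink_empty hreach hacyc
        rw [hz, Finset.sum_empty]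
        exact Finset.sum_nonneg (fun e _ => f.fm_nonneg e r)
      · have hc := hcons v hvs hr0
        have hu : N.u v r = 0 := by
          refine N.u_support v r ?_
          intro hmem
          exact absurd hmem.2 (not_le.2 hrθ0)
        simp only [Network.outEdges, Network.inEdges] at hc
        rw [hu] at hc
        linarith
    have hstep1 : ∑ e ∈ Ek N k, f.fp e r
        ≤ ∑ e ∈ Finset.univ.filter (fun e => k ≤ natD N (N.dst e)), f.fm e r := by
      calc ∑ e ∈ Ek N k, f.fp e r
          ≤ ∑ e ∈ Finset.univ.filter (fun e => k ≤ natD N (N.src e)), f.fp e r := hstep1a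
        _ = ∑ v ∈ Finset.univ.filter (fun v => k ≤ natD N v),
              ∑ e ∈ Finset.univ.filter (fun e => N.src e = v), f.fp e r := hfib1.symm
        _ ≤ ∑ v ∈ Finset.univ.filter (fun v => k ≤ natD N v),
              ∑ e ∈ Finset.univ.filter (fun e => N.dst e = v), f.fm e r :=
            Finset.sum_le_sum hperv
        _ = ∑ e ∈ Finset.univ.filter (fun e => k ≤ natD N (N.dst e)), f.fm e r := hfib2
    have hstep2 : ∑ e ∈ Finset.univ.filter (fun e => k ≤ natD N (N.dst e)), f.fm e r
        = ∑ e ∈ Finset.univ.filter (fun e => k ≤ natD N (N.dst e)),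
            f.fm e (r + (dlt N k e : ℝ)) := by
      refine Finset.sum_congr rfl (fun e he => ?_)
      rw [dlt_eq_zero (Finset.mem_filter.1 he).2]
      norm_num
    have hunion : Ek N k
        = (Finset.univ.filter (fun e => k ≤ natD N (N.dst e))) ∪ Bk N k := by
      ext e
      simp only [Finset.mem_union, mem_Ek, mem_Bk, Finset.mem_filter, Finset.mem_univ, true_and]
      omega
    have hdisj : Disjoint (Finset.univ.filter (fun e => k ≤ natD N (N.dst e))) (Bk N k) := by
      rw [Finset.disjoint_left]
      intro e he1 he2
      have h1 := (Finset.mem_filter.1 he1).2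
      have h2 := (mem_Bk.1 he2).2
      omega
    have hEksplit : ∑ e ∈ Ek N k, f.fm e (r + (dlt N k e : ℝ))
        = ∑ e ∈ Finset.univ.filter (fun e => k ≤ natD N (N.dst e)),
            f.fm e (r + (dlt N k e : ℝ))
          + ∑ e ∈ Bk N k, f.fm e (r + (dlt N k e : ℝ)) := by
      rw [hunion]
      exact Finset.sum_union hdisj
    obtain ⟨e0, he0B, he0q⟩ := hbusy r ⟨hrgt, hI.2⟩
    have hy : r + (dlt N k e0 : ℝ) - (N.tau e0 : ℝ)
        = r + ((dlt N k e0 : ℝ) - (N.tau e0 : ℝ)) := by ring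
    rw [hy] at he0q
    have h0y : 0 ≤ r + ((dlt N k e0 : ℝ) - (N.tau e0 : ℝ)) := by
      by_contra hneg
      push_neg at hneg
      rw [queue_zero_of_nonpos f e0 hf (le_of_lt hneg)] at he0q
      linarith
    have hfm0 := hQ e0 h0y he0q
    have hy2 : r + ((dlt N k e0 : ℝ) - (N.tau e0 : ℝ)) + (N.tau e0 : ℝ)
        = r + (dlt N k e0 : ℝ) := by ring
    rw [hy2] at hfm0
    have hν : (1:ℝ) ≤ (N.nu e0 : ℝ) := by exact_mod_cast N.nu_pos e0
    have hsingle : (N.nu e0 : ℝ) ≤ ∑ e ∈ Bk N k, f.fm e (r + (dlt N k e : ℝ)) := by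
      rw [← hfm0]
      exact Finset.single_le_sum (f := fun e => f.fm e (r + (dlt N k e : ℝ)))
        (fun e _ => f.fm_nonneg e (r + (dlt N k e : ℝ))) he0B
    have hGsplit : G r = ∑ e ∈ Ek N k, f.fp e r
        - ∑ e ∈ Ek N k, f.fm e (r + (dlt N k e : ℝ)) := by
      rw [hG]
      exact Finset.sum_sub_distrib _ _
    rw [hGsplit, hEksplit]
    linarith [hstep1, hstep2]
  have hle : ∫ r in x1..x2, G r ≤ ∫ _r in x1..x2, (-1 : ℝ) := by
    refine intervalIntegral.integral_mono_ae_restrict hx hGint (intervalIntegrable_const) ?_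
    exact (MeasureTheory.ae_restrict_iff' measurableSet_Icc).2 key
  rw [intervalIntegral.integral_const, smul_eq_mul] at hle
  linarith [hdiff, hle]

lemma Bcase (hreach : N.Reachable) (hacyc : N.Acyclic) (hf : f.Feasible) (k : ℕ)
    {r : ℝ} (hcond : N.theta0 + 1 ≤ r ∨ bigK N ≤ k)
    (hq : ∀ e ∈ Bk N k, f.queue e (r + (dlt N k e : ℝ) - (N.tau e : ℝ)) ≤ 0) :
    Lk f k r ≤ Lk f (k + 1) (r - 1) := by
  classical
  rcases hcond with hr | hk
  swap
  · -- top case : every edge of `Ek k` is a pure boundary edge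
    have hEk1 : Ek N (k+1) = ∅ := Ek_empty_of_lt hreach hacyc (by omega)
    have hL2 : Lk f (k+1) (r-1) = 0 := by rw [Lk, hEk1, Finset.sum_empty]
    rw [hL2, Lk]
    refine Finset.sum_nonpos (fun e he => ?_)
    have hee := mem_Ek.1 he
    have hhe : hE N e ≤ bigK N := hE_le_bigK hreach hacyc e
    have htop : N.tau e + natD N (N.dst e) = k := by
      rw [hE] at hhe; omega
    have htau := N.tau_pos e
    have hBk : e ∈ Bk N k := mem_Bk.2 ⟨by omega, by omega⟩
    have hdlt : dlt N k e = N.tau e := by rw [dlt]; omega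
    have := hq e hBk
    rw [hdlt] at this
    have harg : r + (N.tau e : ℝ) - (N.tau e : ℝ) = r := by ring
    rw [harg] at this
    rw [Network.Flow.queue] at this
    calc f.Fp e r - f.Fm e (r + (dlt N k e : ℝ))
        = f.Fp e r - f.Fm e (r + (N.tau e : ℝ)) := by rw [hdlt]
      _ ≤ 0 := this
  · -- main case
    have h0r : (0:ℝ) ≤ r - 1 := by have := N.theta0_nonneg; linarith
    -- per-edge bound
    have key : ∀ e ∈ Ek N k,
        f.Fp e r - f.Fm e (r + (dlt N k e : ℝ))
          ≤ (if e ∈ Ek N (k+1) then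
                (f.Fp e (r-1) - f.Fm e (r - 1 + (dlt N (k+1) e : ℝ)))
                  + (f.Fp e r - f.Fp e (r-1)) else 0)
            - (if k + 1 ≤ natD N (N.dst e) then (f.Fm e r - f.Fm e (r-1)) else 0) := by
      intro e he
      have hee := mem_Ek.1 he
      have htau := N.tau_pos e
      set d := natD N (N.dst e) with hd
      rcases lt_or_ge d (k+1) with hd1 | hd1
      · rcases Nat.lt_or_ge (N.tau e + d) (k+1) with hd2 | hd2
        · -- class 1 : τ + d = k, d < k
          have htd : N.tau e + d = k := by omega
          have hdk : d < k := by omega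
          have hnotE : e ∉ Ek N (k+1) := fun h => by have := mem_Ek.1 h; omega
          have hnotS : ¬ (k + 1 ≤ d) := by omega
          rw [if_neg hnotE, if_neg hnotS]
          have hdlt : dlt N k e = N.tau e := by rw [dlt]; omega
          have hBk : e ∈ Bk N k := mem_Bk.2 ⟨by omega, hdk⟩
          have hqe := hq e hBk
          rw [hdlt] at hqe ⊢
          have harg : r + (N.tau e : ℝ) - (N.tau e : ℝ) = r := by ring
          rw [harg, Network.Flow.queue] at hqe
          linarith
        · rcases Nat.lt_or_ge d k with hdk | hdk
          · -- class 2/3 : d < k ≤ τ + d - 1, pass-through with queue empty, or d = k boundary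
            -- here d < k and k+1 ≤ τ + d
            have hdlt : dlt N k e = k - d := by rw [dlt]; omega
            have hdlt' : dlt N (k+1) e = k + 1 - d := by rw [dlt]; omega
            have hE1 : e ∈ Ek N (k+1) := mem_Ek.2 (by omega)
            have hnotS : ¬ (k + 1 ≤ d) := by omega
            rw [if_pos hE1, if_neg hnotS, hdlt, hdlt']
            have hBk : e ∈ Bk N k := mem_Bk.2 ⟨by omega, hdk⟩
            have hqe := hq e hBk
            rw [hdlt] at hqe
            have hqe' := queue_nonneg f e hf (r + ((k - d : ℕ) : ℝ) - (N.tau e : ℝ))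
            have hq0 : f.queue e (r + ((k - d : ℕ) : ℝ) - (N.tau e : ℝ)) = 0 :=
              le_antisymm hqe hqe'
            rw [Network.Flow.queue] at hq0
            have hcast1 : ((k - d : ℕ) : ℝ) = (k : ℝ) - (d : ℝ) := by
              exact_mod_cast Nat.cast_sub (by omega)
            have hcast2 : ((k + 1 - d : ℕ) : ℝ) = (k : ℝ) + 1 - (d : ℝ) := by
              exact_mod_cast Nat.cast_sub (by omega)
            rw [hcast1] at hq0 ⊢
            rw [hcast2]
            have harg : r + ((k:ℝ) - d) - (N.tau e : ℝ) + (N.tau e : ℝ) = r + ((k:ℝ) - d) := by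
              ring
            rw [harg] at hq0
            have harg2 : r - 1 + ((k:ℝ) + 1 - d) = r + ((k:ℝ) - d) := by ring
            rw [harg2]
            -- hq0 : Fp (r + (k-d) - τ) - Fm (r + (k-d)) = 0
            linarith [hq0]
          · -- class 3 : d = k
            have hdk' : d = k := by omega
            have hdlt : dlt N k e = 0 := by rw [dlt]; omega
            have hdlt' : dlt N (k+1) e = 1 := by rw [dlt]; omega
            have hE1 : e ∈ Ek N (k+1) := mem_Ek.2 (by omega)
            have hnotS : ¬ (k + 1 ≤ d) := by omega
            rw [if_pos hE1, if_neg hnotS, hdlt, hdlt']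
            have harg : r - 1 + ((1:ℕ):ℝ) = r := by push_cast; ring
            rw [harg]
            have harg2 : r + ((0:ℕ):ℝ) = r := by push_cast; ring
            rw [harg2]
            linarith
      · -- class 4 : k+1 ≤ d
        have hdlt : dlt N k e = 0 := by rw [dlt]; omega
        have hdlt' : dlt N (k+1) e = 0 := by rw [dlt]; omega
        have hE1 : e ∈ Ek N (k+1) := mem_Ek.2 (by omega)
        rw [if_pos hE1, if_pos hd1, hdlt, hdlt']
        have harg : r + ((0:ℕ):ℝ) = r := by push_cast; ring
        have harg2 : r - 1 + ((0:ℕ):ℝ) = r - 1 := by push_cast; ring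
        rw [harg, harg2]
        linarith
    -- sum the per-edge bounds
    have hsum := Finset.sum_le_sum key
    rw [Finset.sum_sub_distrib] at hsum
    have hsub1 : Ek N (k+1) ⊆ Ek N k := by
      intro e he; exact mem_Ek.2 (le_trans (Nat.le_succ k) (mem_Ek.1 he))
    have hS2sub : (Finset.univ.filter (fun e => k + 1 ≤ natD N (N.dst e))) ⊆ Ek N k := by
      intro e he
      rw [Finset.mem_filter] at he
      exact mem_Ek.2 (by have := he.2; omega)
    have hif1 : ∑ e ∈ Ek N k, (if e ∈ Ek N (k+1) then
          (f.Fp e (r-1) - f.Fm e (r - 1 + (dlt N (k+1) e : ℝ)))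
            + (f.Fp e r - f.Fp e (r-1)) else 0)
        = ∑ e ∈ Ek N (k+1), ((f.Fp e (r-1) - f.Fm e (r - 1 + (dlt N (k+1) e : ℝ)))
            + (f.Fp e r - f.Fp e (r-1))) := by
      rw [Finset.sum_ite_mem, Finset.inter_eq_right.2 hsub1]
    have hif2 : ∑ e ∈ Ek N k, (if k + 1 ≤ natD N (N.dst e) then (f.Fm e r - f.Fm e (r-1)) else 0)
        = ∑ e ∈ Finset.univ.filter (fun e => k + 1 ≤ natD N (N.dst e)),
            (f.Fm e r - f.Fm e (r-1)) := by
      rw [Finset.sum_filter]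
      refine Finset.sum_subset (Finset.subset_univ _) ?_
      intro e _ hne
      by_cases hP : k + 1 ≤ natD N (N.dst e)
      · exact absurd (hS2sub (Finset.mem_filter.2 ⟨Finset.mem_univ _, hP⟩)) hne
      · rw [if_neg hP]
    have hcons : ∑ e ∈ Finset.univ.filter (fun e => k + 1 ≤ natD N (N.src e)),
          (f.Fp e r - f.Fp e (r-1))
        = ∑ e ∈ Finset.univ.filter (fun e => k + 1 ≤ natD N (N.dst e)),
          (f.Fm e r - f.Fm e (r-1)) := by
      have hfib1 : ∑ v ∈ Finset.univ.filter (fun v => k + 1 ≤ natD N v),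
            ∑ e ∈ Finset.univ.filter (fun e => N.src e = v), (f.Fp e r - f.Fp e (r-1))
          = ∑ e ∈ Finset.univ.filter (fun e => k + 1 ≤ natD N (N.src e)),
            (f.Fp e r - f.Fp e (r-1)) := by
        rw [Finset.sum_fiberwise_eq_sum_filter]
        simp
      have hfib2 : ∑ v ∈ Finset.univ.filter (fun v => k + 1 ≤ natD N v),
            ∑ e ∈ Finset.univ.filter (fun e => N.dst e = v), (f.Fm e r - f.Fm e (r-1))
          = ∑ e ∈ Finset.univ.filter (fun e => k + 1 ≤ natD N (N.dst e)),
            (f.Fm e r - f.Fm e (r-1)) := by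
        rw [Finset.sum_fiberwise_eq_sum_filter]
        simp
      rw [← hfib1, ← hfib2]
      refine Finset.sum_congr rfl (fun v hv => ?_)
      have hvk : k + 1 ≤ natD N v := (Finset.mem_filter.1 hv).2
      have hvne : v ≠ N.sink := by
        intro hveq
        rw [hveq, natD_sink hacyc] at hvk
        omega
      have hc := cons_int f hf hvne (by linarith : (0:ℝ) ≤ r - 1) (by linarith : r - 1 ≤ r)
      rw [u_int_zero v (by linarith) (by linarith), add_zero] at hc
      exact hc
    have hη : ∑ e ∈ Ek N (k+1), (f.Fp e r - f.Fp e (r-1))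
        ≤ ∑ e ∈ Finset.univ.filter (fun e => k + 1 ≤ natD N (N.src e)),
            (f.Fp e r - f.Fp e (r-1)) := by
      refine Finset.sum_le_sum_of_subset_of_nonneg ?_ ?_
      · intro e he
        rw [Finset.mem_filter]
        refine ⟨Finset.mem_univ _, ?_⟩
        have h1 := mem_Ek.1 he
        have h2 := natD_edge hreach hacyc e
        omega
      · intro e _ _
        have := Fp_mono f e (by linarith : r - 1 ≤ r)
        linarith
    have hsplit : ∑ e ∈ Ek N (k+1), ((f.Fp e (r-1) - f.Fm e (r - 1 + (dlt N (k+1) e : ℝ)))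
          + (f.Fp e r - f.Fp e (r-1)))
        = Lk f (k+1) (r-1) + ∑ e ∈ Ek N (k+1), (f.Fp e r - f.Fp e (r-1)) := by
      rw [Lk, ← Finset.sum_add_distrib]
    have hLkk : Lk f k r
        = ∑ e ∈ Ek N k, f.Fp e r - ∑ e ∈ Ek N k, f.Fm e (r + (dlt N k e : ℝ)) := by
      rw [Lk, Finset.sum_sub_distrib]
    rw [Finset.sum_sub_distrib, hif1, hif2, hsplit] at hsum
    linarith [hη, hcons, hsum, hLkk]

end MainLemmas

section Schedule

variable {N : Network} (f : N.Flow)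

/-- The schedule property at level `k`. -/
def SchedP (f : N.Flow) (k : ℕ) : Prop :=
  ∀ θ : ℝ, 0 ≤ θ →
    Lk f k (N.theta0 + (N.tauPmax - k) + θ) ≤ max (N.totalInflow - θ) 0

lemma sched_step (hreach : N.Reachable) (hacyc : N.Acyclic) (hf : f.Feasible)
    (k : ℕ) (hk : k ≤ bigK N) (IH : SchedP f (k + 1)) : SchedP f k := by
  classical
  intro θ2 hθ2
  by_contra hviol
  push_neg at hviol
  set T := N.tauPmax with hT
  set U := N.totalInflow with hU
  set s : ℝ → ℝ := fun θ => N.theta0 + (T - (k:ℝ)) + θ with hs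
  have hθ00 := N.theta0_nonneg
  have hkK : (k:ℝ) ≤ (bigK N : ℝ) := by exact_mod_cast hk
  have hKT : ((bigK N : ℕ) : ℝ) ≤ T := bigK_le_tauPmax hreach hacyc
  have hTk : (k : ℝ) ≤ T := le_trans hkK hKT
  set S : Set ℝ := {θ | θ ∈ Set.Icc 0 θ2 ∧ Lk f k (s θ) ≤ max (U - θ) 0} with hSdef
  have h0S : (0:ℝ) ∈ S := by
    refine ⟨⟨le_refl 0, hθ2⟩, ?_⟩
    have harg : (0:ℝ) ≤ s 0 := by rw [hs]; simp only []; linarith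
    have h1 := Lk_le_totalLoad f k hf (s 0)
    have h2 := totalLoad_le_totalInflow f hreach hacyc hf harg
    calc Lk f k (s 0) ≤ U := le_trans h1 h2
      _ ≤ max (U - 0) 0 := by rw [sub_zero]; exact le_max_left _ _
  have hbdd : BddAbove S := ⟨θ2, fun x hx => hx.1.2⟩
  have hclosed : IsClosed S := by
    have hrfl : S = Set.Icc 0 θ2 ∩ {θ | Lk f k (s θ) ≤ max (U - θ) 0} := rfl
    rw [hrfl]
    have cont1 : Continuous fun θ => Lk f k (s θ) :=
      (Lk_continuous f k).comp (by rw [hs]; continuity)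
    have cont2 : Continuous fun θ : ℝ => max (U - θ) 0 :=
      (continuous_const.sub continuous_id).max continuous_const
    exact isClosed_Icc.inter (isClosed_le cont1 cont2)
  set θ1 := sSup S with hθ1
  have hθ1S : θ1 ∈ S := hclosed.csSup_mem ⟨0, h0S⟩ hbdd
  have hθ1le : θ1 ≤ θ2 := hθ1S.1.2
  have hθ10 : 0 ≤ θ1 := hθ1S.1.1
  have hθ1lt : θ1 < θ2 := by
    rcases eq_or_lt_of_le hθ1le with he | h
    · exfalso
      have h2 := hθ1S.2
      rw [he] at h2
      linarith
    · exact h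
  have hnotS : ∀ θ, θ ∈ Set.Ioc θ1 θ2 → max (U - θ) 0 < Lk f k (s θ) := by
    intro θ hθ
    by_contra hle
    push_neg at hle
    have : θ ∈ S := ⟨⟨le_trans hθ10 (le_of_lt hθ.1), hθ.2⟩, hle⟩
    exact absurd (le_csSup hbdd this) (not_le.2 hθ.1)
  have hbusy : ∀ θ ∈ Set.Ioc θ1 θ2, ∃ e ∈ Bk N k,
      0 < f.queue e (s θ + (dlt N k e : ℝ) - (N.tau e : ℝ)) := by
    intro θ hθI
    by_contra hq
    push_neg at hq
    have hθpos : 0 < θ := lt_of_le_of_lt hθ10 hθI.1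
    have hcond : N.theta0 + 1 ≤ s θ ∨ bigK N ≤ k := by
      rcases eq_or_lt_of_le hk with hkeq | hklt
      · right; omega
      · left
        have hcast : ((k:ℝ) + 1) ≤ (bigK N : ℝ) := by exact_mod_cast hklt
        rw [hs]
        simp only []
        linarith
    have hB := Bcase f hreach hacyc hf k hcond hq
    have harg : s θ - 1 = N.theta0 + (T - ((k:ℝ)+1)) + θ := by rw [hs]; ring
    have hIH := IH θ (le_of_lt hθpos)
    have hcast : ((k+1 : ℕ) : ℝ) = (k:ℝ) + 1 := by push_cast; ring
    rw [hcast] at hIH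
    rw [harg] at hB
    have := hnotS θ hθI
    have hIH' : Lk f (k+1) (N.theta0 + (T - ((k:ℝ)+1)) + θ) ≤ max (U - θ) 0 := hIH
    linarith
  have hsmono : s θ1 ≤ s θ2 := by rw [hs]; simp only []; linarith
  have hsθ1 : N.theta0 ≤ s θ1 := by rw [hs]; simp only []; linarith
  have hbusyr : ∀ r ∈ Set.Ioc (s θ1) (s θ2), ∃ e ∈ Bk N k,
      0 < f.queue e (r + (dlt N k e : ℝ) - (N.tau e : ℝ)) := by
    intro r hr
    have hr1 := hr.1
    have hr2 := hr.2
    rw [hs] at hr1 hr2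
    simp only [] at hr1 hr2
    have h1 : θ1 < r - (N.theta0 + (T - (k:ℝ))) := by linarith
    have h2 : r - (N.theta0 + (T - (k:ℝ))) ≤ θ2 := by linarith
    obtain ⟨e, heB, heq⟩ := hbusy (r - (N.theta0 + (T - (k:ℝ)))) ⟨h1, h2⟩
    have hsr : s (r - (N.theta0 + (T - (k:ℝ)))) = r := by rw [hs]; ring
    rw [hsr] at heq
    exact ⟨e, heB, heq⟩
  have hA := Acase f hreach hacyc hf k hsθ1 hsmono hbusyr
  have hdd : s θ2 - s θ1 = θ2 - θ1 := by rw [hs]; ring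
  rw [hdd] at hA
  have h1 := hθ1S.2
  have hmax : max (U - θ1) 0 - (θ2 - θ1) ≤ max (U - θ2) 0 := by
    rcases le_total (U - θ1) 0 with h | h
    · rw [max_eq_right h]
      have h2 : (0:ℝ) ≤ max (U - θ2) 0 := le_max_right _ _
      linarith
    · rw [max_eq_left h]
      have h2 : U - θ2 ≤ max (U - θ2) 0 := le_max_left _ _
      linarith
  linarith

lemma sched_all (hreach : N.Reachable) (hacyc : N.Acyclic) (hf : f.Feasible) :
    SchedP f 0 := by
  have htriv : SchedP f (bigK N + 1) := by
    intro θ hθ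
    have hz : Lk f (bigK N + 1) (N.theta0 + (N.tauPmax - ((bigK N + 1 : ℕ):ℝ)) + θ) = 0 := by
      rw [Lk, Ek_empty_of_lt hreach hacyc (by omega), Finset.sum_empty]
    rw [hz]
    exact le_max_right _ _
  have H : ∀ j : ℕ, SchedP f (bigK N + 1 - j) := by
    intro j
    induction j with
    | zero => simpa using htriv
    | succ j ih =>
        rcases Nat.lt_or_ge j (bigK N + 1) with hj | hj
        · have hk : bigK N + 1 - j = (bigK N + 1 - (j+1)) + 1 := by omega
          rw [hk] at ih
          exact sched_step f hreach hacyc hf _ (by omega) ih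
        · have heq : bigK N + 1 - (j+1) = bigK N + 1 - j := by omega
          rw [heq]
          exact ih
  have := H (bigK N + 1)
  simpa using this

end Schedule

end TerminationAux

/-- in an acyclic network every feasible flow terminates by
time `θ0 + τ(P_max) + U`. -/
theorem termination_acyclic (N : Network) (hreach : N.Reachable) (hacyc : N.Acyclic)
    (f : N.Flow) (hf : f.Feasible) :
    f.Terminates ∧ f.makespan ≤ N.theta0 + N.tauPmax + N.totalInflow := by
  classical
  have hU0 : 0 ≤ N.totalInflow := by
    rw [Network.totalInflow]
    refine Finset.sum_nonneg (fun v _ => ?_)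
    rw [Network.cumInflow]
    exact intervalIntegral.integral_nonneg N.theta0_nonneg (fun r _ => N.u_nonneg v r)
  have hT0 : 0 ≤ N.tauPmax := TerminationAux.tauPmax_nonneg
  have hsched := TerminationAux.sched_all f hreach hacyc hf
  have h := hsched N.totalInflow hU0
  have harg : N.theta0 + (N.tauPmax - ((0:ℕ):ℝ)) + N.totalInflow
      = N.theta0 + N.tauPmax + N.totalInflow := by push_cast; ring
  rw [harg, TerminationAux.Lk_zero_eq] at h
  have hmax : max (N.totalInflow - N.totalInflow) 0 = 0 := by simp
  rw [hmax] at h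
  have hge := TerminationAux.totalLoad_nonneg f hf (N.theta0 + N.tauPmax + N.totalInflow)
  have hzero : f.totalLoad (N.theta0 + N.tauPmax + N.totalInflow) = 0 := le_antisymm h hge
  have hmem : (N.theta0 + N.tauPmax + N.totalInflow)
      ∈ {θ | N.theta0 ≤ θ ∧ f.totalLoad θ = 0} := ⟨by linarith, hzero⟩
  constructor
  · exact ⟨_, hmem.1, hmem.2⟩
  · exact csInf_le ⟨N.theta0, fun x hx => hx.1⟩ hmem

end
end

section
/- Let f be a feasible flow over time in a single-sink network whose directed graph G is acyclic, in which every edge has travel time τ_e = 1 and in which the sink t has no outgoing edges. For a node v let d̃(v) denote the maximum number of edges of a v-t path (with d̃(t) = 0), and for 0 ≤ k ≤ τ(P_max) := max_v d̃(v) define F_{≤k}(θ) := Σ_{e = uw ∈ E with d̃(u) > k ≥ d̃(w)} F⁻_e(θ) + Σ_{v ≠ t with d̃(v) ≤ k} U_v(θ). Then for every k ∈ {0, 1, …, τ(P_max)} and all times θ ≥ ζ ≥ 0 one has F_{≤k}(θ) ≥ min{ F_{≤τ(P_max)}(ζ), F_{≤k}(ζ) + θ − ζ − τ(P_max) + k }.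 -/
open MeasureTheory Set

noncomputable section

/-- Pessimistic remaining distance `d̃(v)`: the maximum number of edges of a
walk from `v` to the sink. -/
def Network.dTilde (N : Network) (v : N.V) : ℕ :=
  sSup { n | ∃ p, N.IsWalk v p ∧ p.length = n }

/-- `τ(P_max) = max_v d̃(v)` (for unit travel times). -/
def Network.dMax (N : Network) : ℕ := Finset.univ.sup N.dTilde

/-- `F_{≤k}(θ)`: total flow volume with pessimistic remaining distance at most
`k`, i.e. the cumulative outflow of edges crossing level `k` plus the network
inflow at nodes of level at most `k`. -/
def Network.Flow.Fle {N : Network} (f : N.Flow) (k : ℕ) (θ : ℝ) : ℝ :=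
  (∑ e ∈ Finset.univ.filter
      (fun e => k < N.dTilde (N.src e) ∧ N.dTilde (N.dst e) ≤ k), f.Fm e θ) +
  ∑ v ∈ (Finset.univ.erase N.sink).filter (fun v => N.dTilde v ≤ k), N.cumInflow v θ

/-! ### Auxiliary development for the proof of `level_flow_bound` -/

section Aux

open intervalIntegral

namespace Network

variable {N : Network}

/-! #### Walk combinatorics -/

lemma walk_split :
    ∀ (p : List N.E) (x w v : N.V), N.IsWalkBetween x w p → v ∈ p.map N.dst →
      ∃ p1 p2, p = p1 ++ p2 ∧ p1 ≠ [] ∧ N.IsWalkBetween x v p1 ∧ N.IsWalkBetween v w p2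
  | [], x, w, v, _, hv => by simp at hv
  | e :: q, x, w, v, hw, hv => by
    obtain ⟨he, hq⟩ := hw
    rw [List.map_cons] at hv
    rcases List.mem_cons.mp hv with h | h
    · refine ⟨[e], q, rfl, by simp, ⟨he, h.symm⟩, ?_⟩
      rw [h]; exact hq
    · obtain ⟨q1, q2, hsplit, hne, h1, h2⟩ := walk_split q (N.dst e) w v hq h
      exact ⟨e :: q1, q2, by rw [hsplit]; rfl, by simp, ⟨he, h1⟩, h2⟩

lemma walk_nodup (hacyc : N.Acyclic) :
    ∀ (p : List N.E) (x w : N.V), N.IsWalkBetween x w p → (x :: p.map N.dst).Nodup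
  | [], x, w, _ => by simp
  | e :: q, x, w, h => by
    obtain ⟨he, hq⟩ := h
    have ih := walk_nodup hacyc q (N.dst e) w hq
    refine List.nodup_cons.mpr ⟨fun hx => ?_, ih⟩
    obtain ⟨p1, p2, _, hne, h1, _⟩ := walk_split (e :: q) x w x ⟨he, hq⟩ hx
    exact hne (hacyc x p1 h1)

lemma walk_length_le (hacyc : N.Acyclic) {x w : N.V} {p : List N.E}
    (h : N.IsWalkBetween x w p) : p.length ≤ Fintype.card N.V := by
  have hn := (walk_nodup hacyc p x w h).length_le_card
  simp only [List.length_cons, List.length_map] at hn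
  omega

/-! #### `dTilde` basics -/

lemma dTilde_bddAbove (hacyc : N.Acyclic) (v : N.V) :
    BddAbove {n | ∃ p, N.IsWalk v p ∧ p.length = n} := by
  refine ⟨Fintype.card N.V, ?_⟩
  rintro n ⟨p, hp, rfl⟩
  exact walk_length_le hacyc hp

lemma exists_walk_dTilde (hreach : N.Reachable) (hacyc : N.Acyclic) (v : N.V) :
    ∃ p, N.IsWalk v p ∧ p.length = N.dTilde v := by
  have hne : {n | ∃ p, N.IsWalk v p ∧ p.length = n}.Nonempty := by
    obtain ⟨p, hp⟩ := hreach v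
    exact ⟨p.length, p, hp, rfl⟩
  exact Nat.sSup_mem hne (dTilde_bddAbove hacyc v)

lemma length_le_dTilde (hacyc : N.Acyclic) {v : N.V} {p : List N.E}
    (h : N.IsWalk v p) : p.length ≤ N.dTilde v :=
  le_csSup (dTilde_bddAbove hacyc v) ⟨p, h, rfl⟩

lemma dTilde_sink (hacyc : N.Acyclic) : N.dTilde N.sink = 0 := by
  have : {n | ∃ p, N.IsWalk N.sink p ∧ p.length = n} = {0} := by
    ext n
    constructor
    · rintro ⟨p, hp, rfl⟩
      have := hacyc _ p hp
      simp [this]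
    · rintro rfl
      exact ⟨[], rfl, rfl⟩
  rw [Network.dTilde, this, csSup_singleton]

lemma dTilde_succ_le (hreach : N.Reachable) (hacyc : N.Acyclic) (e : N.E) :
    N.dTilde (N.dst e) + 1 ≤ N.dTilde (N.src e) := by
  obtain ⟨p, hp, hl⟩ := exists_walk_dTilde hreach hacyc (N.dst e)
  have hwalk : N.IsWalk (N.src e) (e :: p) := ⟨rfl, hp⟩
  have := length_le_dTilde hacyc hwalk
  simp only [List.length_cons, hl] at this
  omega

lemma dTilde_le_dMax (v : N.V) : N.dTilde v ≤ N.dMax :=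
  Finset.le_sup (Finset.mem_univ v)

/-! #### Interval-integral basics -/

lemma locII {g : ℝ → ℝ} (h : MeasureTheory.LocallyIntegrable g MeasureTheory.volume) (a b : ℝ) :
    IntervalIntegrable g MeasureTheory.volume a b := by
  rw [intervalIntegrable_iff]
  exact (h.integrableOn_isCompact isCompact_uIcc).mono_set Set.uIoc_subset_uIcc

lemma ae_ne_vol (c : ℝ) : ∀ᵐ s ∂(MeasureTheory.volume : MeasureTheory.Measure ℝ), s ≠ c := by
  have h : (MeasureTheory.volume : MeasureTheory.Measure ℝ) {c} = 0 := measure_singleton c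
  have := MeasureTheory.measure_eq_zero_iff_ae_notMem.mp h
  filter_upwards [this] with s hs
  simpa using hs

namespace Flow

variable (f : N.Flow)

lemma fm_II (e : N.E) (a b : ℝ) : IntervalIntegrable (f.fm e) MeasureTheory.volume a b :=
  Network.locII (f.fm_locInt e) a b

lemma fp_II (e : N.E) (a b : ℝ) : IntervalIntegrable (f.fp e) MeasureTheory.volume a b :=
  Network.locII (f.fp_locInt e) a b

lemma u_II (v : N.V) (a b : ℝ) : IntervalIntegrable (N.u v) MeasureTheory.volume a b :=
  (N.u_integrable v).intervalIntegrable

lemma Fm_add (e : N.E) (a b : ℝ) : f.Fm e b = f.Fm e a + ∫ s in a..b, f.fm e s := by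
  rw [Flow.Fm, Flow.Fm, intervalIntegral.integral_add_adjacent_intervals (f.fm_II e 0 a) (f.fm_II e a b)]

lemma Fp_add (e : N.E) (a b : ℝ) : f.Fp e b = f.Fp e a + ∫ s in a..b, f.fp e s := by
  rw [Flow.Fp, Flow.Fp, intervalIntegral.integral_add_adjacent_intervals (f.fp_II e 0 a) (f.fp_II e a b)]

lemma Fm_mono_s7 (e : N.E) {a b : ℝ} (h : a ≤ b) : f.Fm e a ≤ f.Fm e b := by
  rw [f.Fm_add e a b]
  have : 0 ≤ ∫ s in a..b, f.fm e s :=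
    intervalIntegral.integral_nonneg h fun s _ => f.fm_nonneg e s
  linarith

lemma Fp_mono_s7 (e : N.E) {a b : ℝ} (h : a ≤ b) : f.Fp e a ≤ f.Fp e b := by
  rw [f.Fp_add e a b]
  have : 0 ≤ ∫ s in a..b, f.fp e s :=
    intervalIntegral.integral_nonneg h fun s _ => f.fp_nonneg e s
  linarith

lemma Fm_eq_zero (hf : f.Feasible) (e : N.E) {θ : ℝ} (h : θ ≤ (N.tau e : ℝ)) :
    f.Fm e θ = 0 := by
  rw [Flow.Fm]
  rw [intervalIntegral.integral_congr_ae (g := fun _ => (0:ℝ)) ?_, intervalIntegral.integral_zero]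
  filter_upwards [Network.ae_ne_vol (N.tau e : ℝ)] with s hs hmem
  refine hf.2.2.1 e s (lt_of_le_of_ne ?_ hs)
  have htau1 : (1:ℝ) ≤ (N.tau e : ℝ) := by exact_mod_cast N.tau_pos e
  rcases Set.mem_uIoc.mp hmem with ⟨_, h2⟩ | ⟨_, h2⟩
  · exact h2.trans h
  · linarith

lemma Fp_eq_zero (e : N.E) {θ : ℝ} (h : θ ≤ 0) : f.Fp e θ = 0 := by
  rw [Flow.Fp]
  rw [intervalIntegral.integral_congr_ae (g := fun _ => (0:ℝ)) ?_, intervalIntegral.integral_zero]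
  filter_upwards [Network.ae_ne_vol (0 : ℝ)] with s hs hmem
  refine f.fp_zero e s (lt_of_le_of_ne ?_ hs)
  rcases Set.mem_uIoc.mp hmem with ⟨_, h2⟩ | ⟨_, h2⟩
  · exact h2.trans h
  · exact h2

lemma Fp_nonneg' (e : N.E) (θ : ℝ) : 0 ≤ f.Fp e θ := by
  rcases le_or_gt θ 0 with h | h
  · rw [f.Fp_eq_zero e h]
  · rw [Flow.Fp]
    exact intervalIntegral.integral_nonneg h.le fun s _ => f.fp_nonneg e s

end Flow

lemma cumInflow_add (v : N.V) (a b : ℝ) :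
    N.cumInflow v b = N.cumInflow v a + ∫ s in a..b, N.u v s := by
  rw [Network.cumInflow, Network.cumInflow,
    intervalIntegral.integral_add_adjacent_intervals ((N.u_integrable v).intervalIntegrable)
      ((N.u_integrable v).intervalIntegrable)]

lemma cumInflow_mono (v : N.V) {a b : ℝ} (h : a ≤ b) :
    N.cumInflow v a ≤ N.cumInflow v b := by
  rw [N.cumInflow_add v a b]
  have : 0 ≤ ∫ s in a..b, N.u v s :=
    intervalIntegral.integral_nonneg h fun s _ => N.u_nonneg v s
  linarith

lemma cumInflow_eq_zero (v : N.V) {θ : ℝ} (h : θ ≤ 0) : N.cumInflow v θ = 0 := by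
  rw [Network.cumInflow]
  rw [intervalIntegral.integral_congr_ae (g := fun _ => (0:ℝ)) ?_, intervalIntegral.integral_zero]
  filter_upwards [Network.ae_ne_vol (0 : ℝ)] with s hs hmem
  refine N.u_support v s fun hmem' => ?_
  have h0 : s < 0 := by
    rcases Set.mem_uIoc.mp hmem with ⟨_, h2⟩ | ⟨_, h2⟩
    · exact lt_of_le_of_ne (h2.trans h) hs
    · exact lt_of_le_of_ne h2 hs
  exact absurd hmem'.1 (not_le.mpr h0)

/-! #### Conservation, queues, Gronwall -/

lemma Flow.cons_cum (f : N.Flow) (hf : f.Feasible) {v : N.V} (hv : v ≠ N.sink) (θ : ℝ) :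
    ∑ e ∈ N.outEdges v, f.Fp e θ = (∑ e ∈ N.inEdges v, f.Fm e θ) + N.cumInflow v θ := by
  rcases le_or_gt θ 0 with h | h
  · rw [N.cumInflow_eq_zero v h, Finset.sum_eq_zero (fun e _ => f.Fp_eq_zero e h),
      Finset.sum_eq_zero (fun e _ => f.Fm_eq_zero hf e (h.trans (Nat.cast_nonneg _)))]
    ring
  · have hI1 : IntervalIntegrable (fun s => ∑ e ∈ N.outEdges v, f.fp e s)
        MeasureTheory.volume 0 θ :=
      by
      have heq : (∑ e ∈ N.outEdges v, fun s => f.fp e s)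
          = fun s => ∑ e ∈ N.outEdges v, f.fp e s := by
        funext s; simp
      rw [← heq]
      exact IntervalIntegrable.sum _ fun e _ => f.fp_II e 0 θ
    have hI2 : IntervalIntegrable (fun s => ∑ e ∈ N.inEdges v, f.fm e s)
        MeasureTheory.volume 0 θ :=
      by
      have heq : (∑ e ∈ N.inEdges v, fun s => f.fm e s)
          = fun s => ∑ e ∈ N.inEdges v, f.fm e s := by
        funext s; simp
      rw [← heq]
      exact IntervalIntegrable.sum _ fun e _ => f.fm_II e 0 θ
    have key : (∫ s in (0:ℝ)..θ,
        ((∑ e ∈ N.outEdges v, f.fp e s) - ∑ e ∈ N.inEdges v, f.fm e s))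
        = ∫ s in (0:ℝ)..θ, N.u v s := by
      apply intervalIntegral.integral_congr_ae
      filter_upwards [hf.1 v hv] with s hs hmem
      have h0 : (0:ℝ) ≤ s := by
        rcases Set.mem_uIoc.mp hmem with ⟨h1, _⟩ | ⟨_, h2⟩
        · exact h1.le
        · linarith
      exact hs h0
    rw [intervalIntegral.integral_sub hI1 hI2,
      intervalIntegral.integral_finset_sum (fun e (_ : e ∈ N.outEdges v) => f.fp_II e 0 θ),
      intervalIntegral.integral_finset_sum (fun e (_ : e ∈ N.inEdges v) => f.fm_II e 0 θ)] at key
    simp only [Flow.Fp, Flow.Fm, Network.cumInflow]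
    linarith

lemma Flow.queue_eq_zero (f : N.Flow) (hf : f.Feasible) (e : N.E) {θ : ℝ} (h : θ ≤ 0) :
    f.queue e θ = 0 := by
  rw [Flow.queue, f.Fp_eq_zero e h, f.Fm_eq_zero hf e (by linarith)]
  ring

lemma gronwall_aux {g h : ℝ → ℝ} (hg : Continuous g) (hh : Continuous h)
    {a b m : ℝ} (hab : a ≤ b)
    (hstep : ∀ x y, a ≤ x → x ≤ y → y ≤ b →
      (∀ s, x < s → s ≤ y → g s < h s) → g x + m * (y - x) ≤ g y) :
    ∃ σ, a ≤ σ ∧ σ ≤ b ∧ (σ = a ∨ h σ ≤ g σ) ∧ g σ + m * (b - σ) ≤ g b := by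
  set T : Set ℝ := insert a {s | s ∈ Set.Icc a b ∧ h s ≤ g s} with hT
  have hTne : T.Nonempty := ⟨a, Set.mem_insert a _⟩
  have hTbdd : BddAbove T := by
    refine ⟨b, ?_⟩
    rintro s (rfl | ⟨⟨_, h2⟩, _⟩)
    exacts [hab, h2]
  have hTclosed : IsClosed T := by
    rw [hT, Set.insert_eq]
    refine isClosed_singleton.union ?_
    exact isClosed_Icc.inter (isClosed_le hh hg)
  have hσT : sSup T ∈ T := hTclosed.csSup_mem hTne hTbdd
  have haσ : a ≤ sSup T := le_csSup hTbdd (Set.mem_insert a _)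
  have hσb : sSup T ≤ b := csSup_le hTne (by rintro s (rfl | ⟨⟨_, h2⟩, _⟩); exacts [hab, h2])
  have hnotin : ∀ s, sSup T < s → s ≤ b → g s < h s := by
    intro s hs1 hs2
    by_contra hcon
    push_neg at hcon
    have hsT : s ∈ T := Set.mem_insert_of_mem _ ⟨⟨haσ.trans hs1.le, hs2⟩, hcon⟩
    exact absurd (le_csSup hTbdd hsT) (not_le.mpr hs1)
  refine ⟨sSup T, haσ, hσb, ?_, hstep (sSup T) b haσ hσb le_rfl hnotin⟩
  rcases hσT with h1 | ⟨_, h2⟩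
  · exact Or.inl h1
  · exact Or.inr h2

lemma Flow.Fp_cont_s7 (f : N.Flow) (e : N.E) : Continuous (f.Fp e) :=
  intervalIntegral.continuous_primitive (fun a b => f.fp_II e a b) 0

lemma Flow.Fm_cont_s7 (f : N.Flow) (e : N.E) : Continuous (f.Fm e) :=
  intervalIntegral.continuous_primitive (fun a b => f.fm_II e a b) 0

lemma cumInflow_cont (v : N.V) : Continuous (N.cumInflow v) :=
  intervalIntegral.continuous_primitive (fun _ _ => (N.u_integrable v).intervalIntegrable) 0

lemma Flow.queue_cont_s7 (f : N.Flow) (e : N.E) : Continuous (f.queue e) := by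
  have h1 := f.Fp_cont_s7 e
  have h2 := f.Fm_cont_s7 e
  exact h1.sub (h2.comp (continuous_id.add continuous_const))

lemma Flow.fm_shift_II (f : N.Flow) (e : N.E) (c a b : ℝ) :
    IntervalIntegrable (fun s => f.fm e (s + c)) MeasureTheory.volume a b := by
  have := (f.fm_II e (a + c) (b + c)).comp_add_right c
  simpa using this

lemma Flow.queue_nonneg_s7 (f : N.Flow) (hf : f.Feasible) (e : N.E) (θ : ℝ) :
    0 ≤ f.queue e θ := by
  rcases le_or_gt θ 0 with h | h
  · rw [f.queue_eq_zero hf e h]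
  · have hstep : ∀ x y, (0:ℝ) ≤ x → x ≤ y → y ≤ θ →
        (∀ s, x < s → s ≤ y → f.queue e s < (fun _ => (0:ℝ)) s) →
        f.queue e x + 0 * (y - x) ≤ f.queue e y := by
      intro x y hx hxy hyθ hlt
      have hτ : (0:ℝ) ≤ (N.tau e : ℝ) := Nat.cast_nonneg _
      have h3 : (∫ s in x..y, f.fm e (s + (N.tau e : ℝ)))
          = ∫ s in x + (N.tau e : ℝ)..y + (N.tau e : ℝ), f.fm e s :=
        intervalIntegral.integral_comp_add_right _ _
      have h4 : (∫ s in x..y, (f.fp e s - f.fm e (s + (N.tau e : ℝ))))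
          = (∫ s in x..y, f.fp e s) - ∫ s in x..y, f.fm e (s + (N.tau e : ℝ)) :=
        intervalIntegral.integral_sub (f.fp_II e x y) (f.fm_shift_II e _ x y)
      have hpos : 0 ≤ ∫ s in x..y, (f.fp e s - f.fm e (s + (N.tau e : ℝ))) := by
        apply intervalIntegral.integral_nonneg_of_ae_restrict hxy
        filter_upwards [MeasureTheory.ae_restrict_mem measurableSet_Icc,
          MeasureTheory.ae_restrict_of_ae (hf.2.2.2 e),
          MeasureTheory.ae_restrict_of_ae (Network.ae_ne_vol x)] with s hmem hfe hne
        have hxs : x < s := lt_of_le_of_ne hmem.1 (Ne.symm hne)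
        have h0s : (0:ℝ) ≤ s := hx.trans hxs.le
        have hmin := (hfe h0s).2 (le_of_lt (hlt s hxs hmem.2))
        have := min_le_left (f.fp e s) ((N.nu e : ℝ))
        simp only [Pi.zero_apply]
        rw [hmin]
        linarith
      have e1 := f.Fp_add e x y
      have e2 := f.Fm_add e (x + (N.tau e : ℝ)) (y + (N.tau e : ℝ))
      simp only [Flow.queue]
      rw [h4, h3] at hpos
      nlinarith [hpos]
    obtain ⟨σ, hσ0, hσθ, hcase, hgrow⟩ :=
      gronwall_aux (h := fun _ => (0:ℝ)) (f.queue_cont_s7 e) continuous_const h.le hstep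
    have hq0 : 0 ≤ f.queue e σ := by
      rcases hcase with h1 | hle
      · rw [h1, f.queue_eq_zero hf e le_rfl]
      · exact hle
    nlinarith [hgrow]

lemma Flow.load_nonneg_s7 (f : N.Flow) (hf : f.Feasible) (e : N.E) (θ : ℝ) :
    f.Fm e θ ≤ f.Fp e θ := by
  rcases le_or_gt θ (N.tau e : ℝ) with h | h
  · rw [f.Fm_eq_zero hf e h]
    exact f.Fp_nonneg' e θ
  · have hq := f.queue_nonneg_s7 hf e (θ - (N.tau e : ℝ))
    rw [Flow.queue, sub_add_cancel] at hq
    have hτ : (0:ℝ) ≤ (N.tau e : ℝ) := Nat.cast_nonneg _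
    have := f.Fp_mono_s7 e (show θ - (N.tau e:ℝ) ≤ θ by linarith)
    linarith

/-! #### Level sets and cuts -/

def cutE (N : Network) (k : ℕ) : Finset N.E :=
  Finset.univ.filter fun e => k < N.dTilde (N.src e) ∧ N.dTilde (N.dst e) ≤ k

def topE (N : Network) (k : ℕ) : Finset N.E :=
  Finset.univ.filter fun e => N.dTilde (N.src e) = k + 1

def inE2 (N : Network) (k : ℕ) : Finset N.E :=
  Finset.univ.filter fun e => N.dTilde (N.dst e) = k + 1

def highE (N : Network) (k : ℕ) : Finset N.E :=
  Finset.univ.filter fun e => k + 1 < N.dTilde (N.src e) ∧ N.dTilde (N.dst e) ≤ k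

def lowV (N : Network) (k : ℕ) : Finset N.V :=
  (Finset.univ.erase N.sink).filter fun v => N.dTilde v ≤ k

def lvlV (N : Network) (k : ℕ) : Finset N.V :=
  Finset.univ.filter fun v => N.dTilde v = k + 1

lemma cutE_succ_eq (hreach : N.Reachable) (hacyc : N.Acyclic) (k : ℕ) :
    cutE N (k+1) = inE2 N k ∪ highE N k := by
  ext e
  have := dTilde_succ_le hreach hacyc e
  simp only [cutE, inE2, highE, Finset.mem_union, Finset.mem_filter, Finset.mem_univ, true_and]
  omega

lemma cutE_eq (hreach : N.Reachable) (hacyc : N.Acyclic) (k : ℕ) :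
    cutE N k = topE N k ∪ highE N k := by
  ext e
  have := dTilde_succ_le hreach hacyc e
  simp only [cutE, topE, highE, Finset.mem_union, Finset.mem_filter, Finset.mem_univ, true_and]
  omega

lemma disj1 (k : ℕ) : Disjoint (inE2 N k) (highE N k) := by
  rw [Finset.disjoint_left]
  intro e he1 he2
  simp only [inE2, highE, Finset.mem_filter, Finset.mem_univ, true_and] at he1 he2
  omega

lemma disj2 (k : ℕ) : Disjoint (topE N k) (highE N k) := by
  rw [Finset.disjoint_left]
  intro e he1 he2
  simp only [topE, highE, Finset.mem_filter, Finset.mem_univ, true_and] at he1 he2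
  omega

lemma disj3 (k : ℕ) : Disjoint (lowV N k) (lvlV N k) := by
  rw [Finset.disjoint_left]
  intro v hv1 hv2
  simp only [lowV, lvlV, Finset.mem_filter, Finset.mem_univ, true_and,
    Finset.mem_erase] at hv1 hv2
  omega

lemma lvlV_ne_sink (hacyc : N.Acyclic) {k : ℕ} {v : N.V} (hv : v ∈ lvlV N k) :
    v ≠ N.sink := by
  intro h
  simp only [lvlV, Finset.mem_filter, Finset.mem_univ, true_and, h,
    dTilde_sink hacyc] at hv
  omega

lemma lowV_succ (hacyc : N.Acyclic) (k : ℕ) :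
    lowV N (k+1) = lowV N k ∪ lvlV N k := by
  ext v
  simp only [lowV, lvlV, Finset.mem_union, Finset.mem_filter, Finset.mem_erase,
    Finset.mem_univ, true_and, and_true]
  constructor
  · rintro ⟨hv, hle⟩
    rcases Nat.lt_or_ge (N.dTilde v) (k+1) with h | h
    · exact Or.inl ⟨hv, by omega⟩
    · exact Or.inr (by omega)
  · rintro (⟨hv, hle⟩ | hd)
    · exact ⟨hv, by omega⟩
    · refine ⟨?_, by omega⟩
      intro hvs
      rw [hvs, dTilde_sink hacyc] at hd
      omega

lemma sum_out_lvl (g : N.E → ℝ) (k : ℕ) :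
    (∑ v ∈ lvlV N k, ∑ e ∈ N.outEdges v, g e) = ∑ e ∈ topE N k, g e := by
  rw [← Finset.sum_fiberwise_of_maps_to (g := N.src) (t := lvlV N k)
    (fun e he => by
      simp only [topE, Finset.mem_filter, Finset.mem_univ, true_and] at he
      simp only [lvlV, Finset.mem_filter, Finset.mem_univ, true_and, he]) g]
  refine Finset.sum_congr rfl fun v hv => ?_
  refine Finset.sum_congr ?_ fun _ _ => rfl
  simp only [lvlV, Finset.mem_filter, Finset.mem_univ, true_and] at hv
  ext e
  simp only [topE, Network.outEdges, Finset.mem_filter, Finset.mem_univ, true_and]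
  constructor
  · intro h
    exact ⟨by rw [h]; exact hv, h⟩
  · rintro ⟨_, h2⟩
    exact h2

lemma sum_in_lvl (g : N.E → ℝ) (k : ℕ) :
    (∑ v ∈ lvlV N k, ∑ e ∈ N.inEdges v, g e) = ∑ e ∈ inE2 N k, g e := by
  rw [← Finset.sum_fiberwise_of_maps_to (g := N.dst) (t := lvlV N k)
    (fun e he => by
      simp only [inE2, Finset.mem_filter, Finset.mem_univ, true_and] at he
      simp only [lvlV, Finset.mem_filter, Finset.mem_univ, true_and, he]) g]
  refine Finset.sum_congr rfl fun v hv => ?_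
  refine Finset.sum_congr ?_ fun _ _ => rfl
  simp only [lvlV, Finset.mem_filter, Finset.mem_univ, true_and] at hv
  ext e
  simp only [inE2, Network.inEdges, Finset.mem_filter, Finset.mem_univ, true_and]
  constructor
  · intro h
    exact ⟨by rw [h]; exact hv, h⟩
  · rintro ⟨_, h2⟩
    exact h2

lemma Fle_def (f : N.Flow) (j : ℕ) (θ : ℝ) :
    f.Fle j θ = (∑ e ∈ cutE N j, f.Fm e θ) + ∑ v ∈ lowV N j, N.cumInflow v θ := rfl

lemma Flow.Fle_succ (f : N.Flow) (hf : f.Feasible) (hreach : N.Reachable)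
    (hacyc : N.Acyclic) (k : ℕ) (θ : ℝ) :
    f.Fle (k+1) θ = f.Fle k θ + ∑ e ∈ topE N k, (f.Fp e θ - f.Fm e θ) := by
  have hcons : (∑ e ∈ topE N k, f.Fp e θ)
      = (∑ e ∈ inE2 N k, f.Fm e θ) + ∑ v ∈ lvlV N k, N.cumInflow v θ := by
    rw [← sum_out_lvl (fun e => f.Fp e θ) k, ← sum_in_lvl (fun e => f.Fm e θ) k,
      ← Finset.sum_add_distrib]
    exact Finset.sum_congr rfl fun v hv => f.cons_cum hf (lvlV_ne_sink hacyc hv) θ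
  rw [Fle_def, Fle_def, cutE_succ_eq hreach hacyc k, cutE_eq hreach hacyc k,
    lowV_succ hacyc k, Finset.sum_union (disj1 k), Finset.sum_union (disj2 k),
    Finset.sum_union (disj3 k), Finset.sum_sub_distrib]
  linarith

lemma Flow.Fle_le_succ (f : N.Flow) (hf : f.Feasible) (hreach : N.Reachable)
    (hacyc : N.Acyclic) (k : ℕ) (θ : ℝ) : f.Fle k θ ≤ f.Fle (k+1) θ := by
  rw [f.Fle_succ hf hreach hacyc k θ]
  have h0 : 0 ≤ ∑ e ∈ topE N k, (f.Fp e θ - f.Fm e θ) :=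
    Finset.sum_nonneg fun e _ => by linarith [f.load_nonneg_s7 hf e θ]
  linarith

lemma Flow.Fle_step_ge (f : N.Flow) (hf : f.Feasible) (hreach : N.Reachable)
    (hacyc : N.Acyclic) (htau : ∀ e, N.tau e = 1) (k : ℕ) (θ : ℝ) :
    f.Fle (k+1) (θ-1) - (∑ e ∈ topE N k, f.queue e (θ-1)) ≤ f.Fle k θ := by
  rw [f.Fle_succ hf hreach hacyc k (θ-1), Fle_def f k (θ-1), Fle_def f k θ]
  have hq : ∀ e : N.E, f.Fp e (θ-1) - f.Fm e (θ-1) - f.queue e (θ-1)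
      = f.Fm e θ - f.Fm e (θ-1) := by
    intro e
    have ht : θ - 1 + (N.tau e : ℝ) = θ := by rw [htau e]; push_cast; ring
    rw [Flow.queue, ht]
    ring
  have hsum : (∑ e ∈ topE N k, (f.Fp e (θ-1) - f.Fm e (θ-1)))
        - (∑ e ∈ topE N k, f.queue e (θ-1))
      = ∑ e ∈ topE N k, (f.Fm e θ - f.Fm e (θ-1)) := by
    rw [← Finset.sum_sub_distrib]
    exact Finset.sum_congr rfl fun e _ => hq e
  have hcut : (∑ e ∈ topE N k, (f.Fm e θ - f.Fm e (θ-1)))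
      ≤ ∑ e ∈ cutE N k, (f.Fm e θ - f.Fm e (θ-1)) := by
    apply Finset.sum_le_sum_of_subset_of_nonneg
    · rw [cutE_eq hreach hacyc k]
      exact Finset.subset_union_left
    · intro e _ _
      have := f.Fm_mono_s7 e (show θ-1 ≤ θ by linarith)
      linarith
  have h1 : (∑ e ∈ cutE N k, (f.Fm e θ - f.Fm e (θ-1)))
      = (∑ e ∈ cutE N k, f.Fm e θ) - ∑ e ∈ cutE N k, f.Fm e (θ-1) :=
    Finset.sum_sub_distrib _ _
  have h2 : (∑ v ∈ lowV N k, N.cumInflow v (θ-1)) ≤ ∑ v ∈ lowV N k, N.cumInflow v θ :=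
    Finset.sum_le_sum fun v _ => N.cumInflow_mono v (by linarith)
  linarith

/-! #### The rate function -/

def rate (f : N.Flow) (k : ℕ) : ℝ → ℝ :=
  fun s => (∑ e ∈ cutE N k, f.fm e s) + ∑ v ∈ lowV N k, N.u v s

lemma sumII {ι : Type*} {a b : ℝ} (s : Finset ι) (g : ι → ℝ → ℝ)
    (h : ∀ i ∈ s, IntervalIntegrable (g i) MeasureTheory.volume a b) :
    IntervalIntegrable (fun t => ∑ i ∈ s, g i t) MeasureTheory.volume a b := by
  have heq : (∑ i ∈ s, g i) = fun t => ∑ i ∈ s, g i t := by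
    funext t; simp
  rw [← heq]
  exact IntervalIntegrable.sum s h

lemma rate_II (f : N.Flow) (k : ℕ) (a b : ℝ) :
    IntervalIntegrable (rate f k) MeasureTheory.volume a b := by
  apply IntervalIntegrable.add
  · exact sumII _ _ fun e _ => f.fm_II e a b
  · exact sumII _ _ fun v _ => Flow.u_II v a b

lemma rate_nonneg (f : N.Flow) (k : ℕ) (s : ℝ) : 0 ≤ rate f k s :=
  add_nonneg (Finset.sum_nonneg fun e _ => f.fm_nonneg e s)
    (Finset.sum_nonneg fun v _ => N.u_nonneg v s)

lemma Flow.Fle_add (f : N.Flow) (k : ℕ) (a b : ℝ) :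
    f.Fle k b = f.Fle k a + ∫ s in a..b, rate f k s := by
  rw [Fle_def, Fle_def]
  have h1 : (∫ s in a..b, rate f k s)
      = (∑ e ∈ cutE N k, ∫ s in a..b, f.fm e s) + ∑ v ∈ lowV N k, ∫ s in a..b, N.u v s := by
    rw [show rate f k = fun s => (∑ e ∈ cutE N k, f.fm e s) + ∑ v ∈ lowV N k, N.u v s from rfl]
    rw [intervalIntegral.integral_add (sumII _ _ fun e _ => f.fm_II e a b)
      (sumII _ _ fun v _ => Flow.u_II v a b),
      intervalIntegral.integral_finset_sum (fun e (_ : e ∈ cutE N k) => f.fm_II e a b),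
      intervalIntegral.integral_finset_sum (fun v (_ : v ∈ lowV N k) => Flow.u_II v a b)]
  rw [h1, Finset.sum_congr rfl (fun e (_ : e ∈ cutE N k) => f.Fm_add e a b),
    Finset.sum_congr rfl (fun v (_ : v ∈ lowV N k) => N.cumInflow_add v a b),
    Finset.sum_add_distrib, Finset.sum_add_distrib]
  ring

lemma Flow.Fle_mono (f : N.Flow) (k : ℕ) {a b : ℝ} (h : a ≤ b) :
    f.Fle k a ≤ f.Fle k b := by
  rw [f.Fle_add k a b]
  have h0 : 0 ≤ ∫ s in a..b, rate f k s :=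
    intervalIntegral.integral_nonneg h fun s _ => rate_nonneg f k s
  linarith

lemma Flow.Fle_cont (f : N.Flow) (k : ℕ) : Continuous (f.Fle k) := by
  have heq : f.Fle k = fun b => f.Fle k 0 + ∫ s in (0:ℝ)..b, rate f k s :=
    funext fun b => f.Fle_add k 0 b
  rw [heq]
  exact continuous_const.add (intervalIntegral.continuous_primitive (fun a b => rate_II f k a b) 0)

/-! #### The a.e. derivative bound -/

lemma Flow.ae_fm_of_queue (f : N.Flow) (hf : f.Feasible) (htau : ∀ e, N.tau e = 1) (e : N.E) :
    ∀ᵐ s ∂(MeasureTheory.volume : MeasureTheory.Measure ℝ),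
      0 < f.queue e (s-1) → (N.nu e : ℝ) ≤ f.fm e s := by
  have h2 := (measurePreserving_sub_right
    (MeasureTheory.volume : MeasureTheory.Measure ℝ) 1).quasiMeasurePreserving.ae (hf.2.2.2 e)
  filter_upwards [h2] with s hs hq
  have hs1 : (0:ℝ) ≤ s - 1 := by
    by_contra hneg
    push_neg at hneg
    rw [f.queue_eq_zero hf e hneg.le] at hq
    exact lt_irrefl 0 hq
  have h1 := (hs hs1).1 hq
  have ht : s - 1 + (N.tau e : ℝ) = s := by rw [htau e]; push_cast; ring
  rw [ht] at h1
  rw [h1]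

lemma Flow.ae_rate (f : N.Flow) (hf : f.Feasible) (hreach : N.Reachable)
    (hacyc : N.Acyclic) (htau : ∀ e, N.tau e = 1) (k : ℕ) :
    ∀ᵐ s ∂(MeasureTheory.volume : MeasureTheory.Measure ℝ),
      f.Fle k s < f.Fle (k+1) (s-1) → 1 ≤ rate f k s := by
  have hae : ∀ᵐ s ∂(MeasureTheory.volume : MeasureTheory.Measure ℝ),
      ∀ e : N.E, 0 < f.queue e (s-1) → (N.nu e : ℝ) ≤ f.fm e s := by
    rw [MeasureTheory.ae_all_iff]
    exact fun e => f.ae_fm_of_queue hf htau e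
  filter_upwards [hae] with s hs hlt
  have hI2 := f.Fle_step_ge hf hreach hacyc htau k s
  have hsum : 0 < ∑ e ∈ topE N k, f.queue e (s-1) := by linarith
  obtain ⟨e, he, hqe⟩ : ∃ e ∈ topE N k, 0 < f.queue e (s-1) := by
    by_contra hcon
    push_neg at hcon
    have : (∑ e ∈ topE N k, f.queue e (s-1)) ≤ 0 :=
      Finset.sum_nonpos fun e he => hcon e he
    linarith
  have hν := hs e hqe
  have h1 : (1:ℝ) ≤ f.fm e s := le_trans (by exact_mod_cast N.nu_pos e) hν
  have hsub : e ∈ cutE N k := by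
    rw [cutE_eq hreach hacyc k]
    exact Finset.mem_union_left _ he
  have h2 : f.fm e s ≤ ∑ e ∈ cutE N k, f.fm e s :=
    Finset.single_le_sum (fun i _ => f.fm_nonneg i s) hsub
  have h3 : (0:ℝ) ≤ ∑ v ∈ lowV N k, N.u v s :=
    Finset.sum_nonneg fun v _ => N.u_nonneg v s
  show (1:ℝ) ≤ (∑ e ∈ cutE N k, f.fm e s) + ∑ v ∈ lowV N k, N.u v s
  linarith

/-! #### The main induction -/

lemma Flow.step (f : N.Flow) (hf : f.Feasible) (hreach : N.Reachable)
    (hacyc : N.Acyclic) (htau : ∀ e, N.tau e = 1) (k : ℕ) {ζ θ : ℝ}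
    (hζ : 0 ≤ ζ) (hθ : ζ ≤ θ) :
    ∃ σ, ζ ≤ σ ∧ σ ≤ θ ∧ (σ = ζ ∨ f.Fle (k+1) (σ-1) ≤ f.Fle k σ) ∧
      f.Fle k σ + (θ - σ) ≤ f.Fle k θ := by
  have hcont2 : Continuous (fun s => f.Fle (k+1) (s-1)) :=
    (f.Fle_cont (k+1)).comp (continuous_id.sub continuous_const)
  have hstep : ∀ x y, ζ ≤ x → x ≤ y → y ≤ θ →
      (∀ s, x < s → s ≤ y → f.Fle k s < (fun s => f.Fle (k+1) (s-1)) s) →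
      f.Fle k x + 1 * (y - x) ≤ f.Fle k y := by
    intro x y hx hxy hyθ hlt
    have hkey : y - x ≤ ∫ s in x..y, rate f k s := by
      have hc : (y - x) = ∫ s in x..y, (1:ℝ) := by simp
      rw [hc]
      apply intervalIntegral.integral_mono_ae_restrict hxy intervalIntegrable_const
        (rate_II f k x y)
      filter_upwards [MeasureTheory.ae_restrict_mem measurableSet_Icc,
        MeasureTheory.ae_restrict_of_ae (f.ae_rate hf hreach hacyc htau k),
        MeasureTheory.ae_restrict_of_ae (Network.ae_ne_vol x)] with s hmem hrate hne
      exact hrate (hlt s (lt_of_le_of_ne hmem.1 (Ne.symm hne)) hmem.2)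
    have hadd := f.Fle_add k x y
    linarith
  obtain ⟨σ, h1, h2, h3, h4⟩ := gronwall_aux (f.Fle_cont k) hcont2 hθ hstep
  exact ⟨σ, h1, h2, h3, by linarith [h4]⟩

lemma Flow.main_aux (f : N.Flow) (hf : f.Feasible) (hreach : N.Reachable)
    (hacyc : N.Acyclic) (htau : ∀ e, N.tau e = 1) :
    ∀ m k, k + m = N.dMax → ∀ ζ θ : ℝ, 0 ≤ ζ → ζ ≤ θ →
      min (f.Fle N.dMax ζ) (f.Fle k ζ + θ - ζ - (N.dMax : ℝ) + (k : ℝ)) ≤ f.Fle k θ := by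
  intro m
  induction m with
  | zero =>
    intro k hk ζ θ hζ hθ
    have hkd : k = N.dMax := by omega
    subst hkd
    exact le_trans (min_le_left _ _) (f.Fle_mono _ hθ)
  | succ m ih =>
    intro k hk ζ θ hζ hθ
    have hk1 : (k+1) + m = N.dMax := by omega
    obtain ⟨σ, hζσ, hσθ, hcase, hgrow⟩ := f.step hf hreach hacyc htau k hζ hθ
    have hkdm : (k:ℝ) + 1 ≤ (N.dMax : ℝ) := by
      have h' : k + 1 ≤ N.dMax := by omega
      exact_mod_cast h'
    rcases hcase with h1 | h2
    · refine le_trans (min_le_right _ _) ?_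
      rw [h1] at hgrow
      linarith
    · rcases le_or_gt ζ (σ - 1) with hσ1 | hσ1
      · have hIH := ih (k+1) hk1 ζ (σ-1) hζ hσ1
        have hle : f.Fle k ζ ≤ f.Fle (k+1) ζ := f.Fle_le_succ hf hreach hacyc k ζ
        have hhh := le_trans hIH h2
        have hcast : ((k+1 : ℕ):ℝ) = (k:ℝ) + 1 := by push_cast; ring
        rcases le_total (f.Fle N.dMax ζ)
          (f.Fle (k+1) ζ + (σ-1) - ζ - (N.dMax:ℝ) + ((k+1:ℕ):ℝ)) with hmin | hmin
        · rw [min_eq_left hmin] at hhh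
          refine le_trans (min_le_left _ _) ?_
          linarith
        · rw [min_eq_right hmin] at hhh
          refine le_trans (min_le_right _ _) ?_
          rw [hcast] at hhh
          linarith
      · refine le_trans (min_le_right _ _) ?_
        have hmono := f.Fle_mono k hζσ
        linarith

end Network

end Aux

/-- level-crossing bound for feasible flows in acyclic networks
with unit travel times. -/
theorem level_flow_bound (N : Network) (hreach : N.Reachable) (hacyc : N.Acyclic)
    (htau : ∀ e, N.tau e = 1) (hsink : N.outEdges N.sink = ∅)
    (f : N.Flow) (hf : f.Feasible) (k : ℕ) (hk : k ≤ N.dMax)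
    (ζ θ : ℝ) (hζ : 0 ≤ ζ) (hθ : ζ ≤ θ) :
    min (f.Fle N.dMax ζ) (f.Fle k ζ + θ - ζ - (N.dMax : ℝ) + (k : ℝ)) ≤ f.Fle k θ := by
  exact f.main_aux hf hreach hacyc htau (N.dMax - k) k (by omega) ζ θ hζ hθ

end
end
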